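/- arXiv:0912.0342 — 2 statements merged into one kernel-verified Lean document; each statement's English description precedes it below -/
import Mathlib

section
/- Let H be a weak bialgebra and g₁, g₂ ∈ H group-like elements. Then the truncated tensor product of comodules H_s^{g₁} ⊗̂ H_s^{g₂} is isomorphic as a right H-comodule to H_s^{g₁g₂}, with the isomorphism induced by the left-unit constraint of the comodule category. -/
open TensorProduct

noncomputable section

/-- The data of a (candidate) weak bialgebra over `k`: an associative unital
multiplication `mul` with unit `one`, a comultiplication `comul` and a counit `counit`. -/
structure WBData (k : Type) [CommRing k] (H : Type) [AddCommGroup H] [Module k H] where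
  mul : H →ₗ[k] H →ₗ[k] H
  one : H
  comul : H →ₗ[k] H ⊗[k] H
  counit : H →ₗ[k] k

namespace WBData

variable {k : Type} [CommRing k] {H : Type} [AddCommGroup H] [Module k H] (W : WBData k H)

/-- Multiplication as a map on the tensor product. -/
def mulT : H ⊗[k] H →ₗ[k] H := TensorProduct.lift W.mul

/-- The induced multiplication on `H ⊗ H`: `(a⊗b)·(c⊗d) = (ac)⊗(bd)`. -/
def mul₂ (x y : H ⊗[k] H) : H ⊗[k] H :=
  TensorProduct.map W.mulT W.mulT (TensorProduct.tensorTensorTensorComm k H H H H (x ⊗ₜ[k] y))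

/-- The source counital map `ε_s(h) = 1' ε(h 1'')`. -/
def εsMap : H →ₗ[k] H :=
  (TensorProduct.lid k H).toLinearMap
    ∘ₗ LinearMap.rTensor H (W.counit ∘ₗ W.mulT)
    ∘ₗ (TensorProduct.assoc k H H H).symm.toLinearMap
    ∘ₗ (TensorProduct.mk k H (H ⊗[k] H)).flip ((TensorProduct.comm k H H) (W.comul W.one))

/-- The target counital map `ε_t(h) = ε(1' h) 1''`. -/
def εtMap : H →ₗ[k] H :=
  (TensorProduct.rid k H).toLinearMap
    ∘ₗ LinearMap.lTensor H (W.counit ∘ₗ W.mulT)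
    ∘ₗ (TensorProduct.assoc k H H H).toLinearMap
    ∘ₗ (TensorProduct.mk k (H ⊗[k] H) H) ((TensorProduct.comm k H H) (W.comul W.one))

/-- The map `\bar ε_s(h) = 1' ε(1'' h)`. -/
def barεsMap : H →ₗ[k] H :=
  (TensorProduct.rid k H).toLinearMap
    ∘ₗ LinearMap.lTensor H (W.counit ∘ₗ W.mulT)
    ∘ₗ (TensorProduct.assoc k H H H).toLinearMap
    ∘ₗ (TensorProduct.mk k (H ⊗[k] H) H) (W.comul W.one)

/-- The source base algebra `H_s = ε_s(H)`. -/
def Hs : Submodule k H := LinearMap.range W.εsMap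

/-- The target base algebra `H_t = ε_t(H)`. -/
def Ht : Submodule k H := LinearMap.range W.εtMap

/-- The axioms of a weak bialgebra for the data `W`. -/
structure IsWeakBialgebra : Prop where
  mul_assoc : ∀ x y z : H, W.mul (W.mul x y) z = W.mul x (W.mul y z)
  one_mul : ∀ x : H, W.mul W.one x = x
  mul_one : ∀ x : H, W.mul x W.one = x
  coassoc : ∀ x : H,
    (TensorProduct.assoc k H H H) (LinearMap.rTensor H W.comul (W.comul x)) =
      LinearMap.lTensor H W.comul (W.comul x)
  counit_left : ∀ x : H,
    (TensorProduct.lid k H) (LinearMap.rTensor H W.counit (W.comul x)) = x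
  counit_right : ∀ x : H,
    (TensorProduct.rid k H) (LinearMap.lTensor H W.counit (W.comul x)) = x
  comul_mul : ∀ x y : H, W.comul (W.mul x y) = W.mul₂ (W.comul x) (W.comul y)
  counit_mul : ∀ x y z : H, W.counit (W.mul (W.mul x y) z) =
    (LinearMap.mul' k k)
      (TensorProduct.map (W.counit ∘ₗ W.mul x) (W.counit ∘ₗ W.mul.flip z) (W.comul y))
  counit_mul_op : ∀ x y z : H, W.counit (W.mul (W.mul x y) z) =
    (LinearMap.mul' k k)
      (TensorProduct.map (W.counit ∘ₗ W.mul x) (W.counit ∘ₗ W.mul.flip z)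
        ((TensorProduct.comm k H H) (W.comul y)))
  comul_one : LinearMap.rTensor H W.comul (W.comul W.one) =
    (LinearMap.rTensor H (TensorProduct.comm k H H).toLinearMap)
      ((TensorProduct.assoc k H H H).symm
        ((TensorProduct.map W.mulT LinearMap.id)
          ((TensorProduct.tensorTensorTensorComm k H H H H)
            (((TensorProduct.comm k H H) (W.comul W.one)) ⊗ₜ[k] (W.comul W.one)))))
  comul_one_op : LinearMap.rTensor H W.comul (W.comul W.one) =
    (LinearMap.rTensor H (TensorProduct.comm k H H).toLinearMap)
      ((TensorProduct.assoc k H H H).symm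
        ((TensorProduct.map (W.mulT ∘ₗ (TensorProduct.comm k H H).toLinearMap) LinearMap.id)
          ((TensorProduct.tensorTensorTensorComm k H H H H)
            (((TensorProduct.comm k H H) (W.comul W.one)) ⊗ₜ[k] (W.comul W.one)))))

/-- `g` is right group-like: `Δ g = (g⊗g)·Δ1` and `ε_s(g) = 1`. -/
def IsRightGroupLike (g : H) : Prop :=
  W.comul g = W.mul₂ (g ⊗ₜ[k] g) (W.comul W.one) ∧ W.εsMap g = W.one

/-- `g` is left group-like: `Δ g = Δ1·(g⊗g)` and `ε_t(g) = 1`. -/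
def IsLeftGroupLike (g : H) : Prop :=
  W.comul g = W.mul₂ (W.comul W.one) (g ⊗ₜ[k] g) ∧ W.εtMap g = W.one

/-- `g` is group-like if it is both right and left group-like. -/
def IsGroupLike (g : H) : Prop := W.IsRightGroupLike g ∧ W.IsLeftGroupLike g

/-- The coaction `x ↦ x' ⊗ (g x'')` of `H` on (the ambient space of) `H_s`,
defining the comodule `H_s^g` for a group-like `g`. -/
def βg (g : H) : H →ₗ[k] H ⊗[k] H :=
  LinearMap.lTensor H (W.mul g) ∘ₗ W.comul

/-- A coaction `β : V → V ⊗ H` is a (right) comodule structure if it is coassociative and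
counital. -/
def IsCoaction {V : Type} [AddCommGroup V] [Module k V] (β : V →ₗ[k] V ⊗[k] H) : Prop :=
  (∀ v : V, (TensorProduct.assoc k V H H) (LinearMap.rTensor H β (β v)) =
      LinearMap.lTensor V W.comul (β v)) ∧
  (∀ v : V, (TensorProduct.rid k V) (LinearMap.lTensor V W.counit (β v)) = v)

/-- The truncation idempotent `P_{V,W}(v⊗w) = (v₀⊗w₀) ε(v₁w₁)` of two comodules, expressed
on the ambient tensor product. -/
def truncP {V U : Type} [AddCommGroup V] [Module k V] [AddCommGroup U] [Module k U]
    (βa : V →ₗ[k] V ⊗[k] H) (βb : U →ₗ[k] U ⊗[k] H) : V ⊗[k] U →ₗ[k] V ⊗[k] U :=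
  (TensorProduct.rid k (V ⊗[k] U)).toLinearMap
    ∘ₗ LinearMap.lTensor (V ⊗[k] U) (W.counit ∘ₗ W.mulT)
    ∘ₗ (TensorProduct.tensorTensorTensorComm k V H U H).toLinearMap
    ∘ₗ TensorProduct.map βa βb

/-- The coaction `v⊗w ↦ (v₀⊗w₀)⊗(v₁w₁)` on the (truncated) tensor product of two comodules,
expressed on the ambient tensor product. -/
def βtens {V U : Type} [AddCommGroup V] [Module k V] [AddCommGroup U] [Module k U]
    (βa : V →ₗ[k] V ⊗[k] H) (βb : U →ₗ[k] U ⊗[k] H) : V ⊗[k] U →ₗ[k] (V ⊗[k] U) ⊗[k] H :=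
  LinearMap.lTensor (V ⊗[k] U) W.mulT
    ∘ₗ (TensorProduct.tensorTensorTensorComm k V H U H).toLinearMap
    ∘ₗ TensorProduct.map βa βb

/-- The two-sided ideal (with respect to `W.mul`) generated by a set `s`. -/
def twoSidedIdeal (s : Set H) : Submodule k H :=
  sInf {J : Submodule k H | s ⊆ J ∧ ∀ x : H, ∀ y ∈ J, W.mul x y ∈ J ∧ W.mul y x ∈ J}

/-- Powers of an element with respect to `W.mul`. -/
def powW (g : H) : ℕ → H
  | 0 => W.one
  | n + 1 => W.mul (powW g n) g

/-- An antipode for `W`, making it a weak Hopf algebra. -/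
def IsAntipode (S : H →ₗ[k] H) : Prop :=
  (∀ x : H, W.mulT (LinearMap.lTensor H S (W.comul x)) = W.εtMap x) ∧
  (∀ x : H, W.mulT (LinearMap.rTensor H S (W.comul x)) = W.εsMap x) ∧
  (∀ x : H, W.mulT (LinearMap.lTensor H S
      (LinearMap.rTensor H (W.mulT ∘ₗ LinearMap.rTensor H S)
        (LinearMap.rTensor H W.comul (W.comul x)))) = S x)

end WBData

/-- A homomorphism of weak bialgebras: a linear map which is a homomorphism of unital
algebras and of counital coalgebras. -/
def IsWBHom {k : Type} [CommRing k] {H H' : Type} [AddCommGroup H] [Module k H]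
    [AddCommGroup H'] [Module k H'] (W : WBData k H) (W' : WBData k H')
    (f : H →ₗ[k] H') : Prop :=
  (∀ x y : H, f (W.mul x y) = W'.mul (f x) (f y)) ∧
  f W.one = W'.one ∧
  (∀ x : H, W'.comul (f x) = TensorProduct.map f f (W.comul x)) ∧
  (∀ x : H, W'.counit (f x) = W.counit x)

end

noncomputable section Aux
open TensorProduct LinearMap

variable {k : Type} [CommRing k] {H : Type} [AddCommGroup H] [Module k H]

namespace WBData
variable (W : WBData k H)

theorem mulT_tmul (a b : H) : W.mulT (a ⊗ₜ[k] b) = W.mul a b := rfl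

theorem mul2_tmul (a b c d : H) :
    W.mul₂ (a ⊗ₜ[k] b) (c ⊗ₜ[k] d) = W.mul a c ⊗ₜ[k] W.mul b d := by
  simp [WBData.mul₂, tensorTensorTensorComm_tmul, mulT_tmul]

/-- `mul₂` as a bilinear map. -/
def mul2L : (H ⊗[k] H) →ₗ[k] (H ⊗[k] H) →ₗ[k] H ⊗[k] H :=
  (TensorProduct.mk k (H ⊗[k] H) (H ⊗[k] H)).compr₂
    (TensorProduct.map W.mulT W.mulT ∘ₗ (TensorProduct.tensorTensorTensorComm k H H H H).toLinearMap)

theorem mul2L_apply (x y : H ⊗[k] H) : W.mul2L x y = W.mul₂ x y := rfl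

theorem mul2_eq_map (a b : H) (u : H ⊗[k] H) :
    W.mul₂ (a ⊗ₜ[k] b) u = TensorProduct.map (W.mul a) (W.mul b) u := by
  rw [← mul2L_apply]
  induction u using TensorProduct.induction_on with
  | zero => simp
  | tmul c d => simp [mul2L_apply, mul2_tmul]
  | add u v hu hv => simp [map_add, hu, hv]

end WBData
end Aux
noncomputable section Aux2
open TensorProduct LinearMap

variable {k : Type} [CommRing k] {H : Type} [AddCommGroup H] [Module k H]

namespace WBData
variable (W : WBData k H) {ι : Type} {S : Finset ι} {e f : ι → H}

section Rep

theorem εs_apply (hrep : W.comul W.one = ∑ i ∈ S, e i ⊗ₜ[k] f i) (h : H) :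
    W.εsMap h = ∑ i ∈ S, W.counit (W.mul h (f i)) • e i := by
  simp [WBData.εsMap, hrep, map_sum, tmul_sum, comm_tmul, assoc_symm_tmul,
    rTensor_tmul, lid_tmul, mulT_tmul, flip_apply, mk_apply]

theorem εt_apply (hrep : W.comul W.one = ∑ i ∈ S, e i ⊗ₜ[k] f i) (h : H) :
    W.εtMap h = ∑ i ∈ S, W.counit (W.mul (e i) h) • f i := by
  simp [WBData.εtMap, hrep, map_sum, sum_tmul, comm_tmul, assoc_tmul,
    lTensor_tmul, rid_tmul, mulT_tmul, mk_apply]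

theorem barεs_apply (hrep : W.comul W.one = ∑ i ∈ S, e i ⊗ₜ[k] f i) (h : H) :
    W.barεsMap h = ∑ i ∈ S, W.counit (W.mul (f i) h) • e i := by
  simp [WBData.barεsMap, hrep, map_sum, sum_tmul, assoc_tmul,
    lTensor_tmul, rid_tmul, mulT_tmul, mk_apply]

variable (hW : W.IsWeakBialgebra) (hrep : W.comul W.one = ∑ i ∈ S, e i ⊗ₜ[k] f i)

theorem M1 (hW : W.IsWeakBialgebra) (hrep : W.comul W.one = ∑ i ∈ S, e i ⊗ₜ[k] f i)
    (X Z : H) : W.counit (W.mul X Z) =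
    ∑ i ∈ S, W.counit (W.mul X (e i)) * W.counit (W.mul (f i) Z) := by
  have h := hW.counit_mul X W.one Z
  rw [hW.mul_one] at h
  rw [h, hrep]
  simp [map_sum, mulT_tmul, flip_apply]

theorem Mop1 (hW : W.IsWeakBialgebra) (hrep : W.comul W.one = ∑ i ∈ S, e i ⊗ₜ[k] f i)
    (X Z : H) : W.counit (W.mul X Z) =
    ∑ i ∈ S, W.counit (W.mul X (f i)) * W.counit (W.mul (e i) Z) := by
  have h := hW.counit_mul_op X W.one Z
  rw [hW.mul_one] at h
  rw [h, hrep]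
  simp [map_sum, comm_tmul, mulT_tmul, flip_apply]

theorem U1 (hW : W.IsWeakBialgebra) (hrep : W.comul W.one = ∑ i ∈ S, e i ⊗ₜ[k] f i) :
    LinearMap.rTensor H W.comul (W.comul W.one) =
    ∑ i ∈ S, ∑ j ∈ S, (e i ⊗ₜ[k] W.mul (f i) (e j)) ⊗ₜ[k] f j := by
  rw [hW.comul_one, hrep]
  simp [map_sum, sum_tmul, tmul_sum, comm_tmul, tensorTensorTensorComm_tmul,
    assoc_symm_tmul, rTensor_tmul, mulT_tmul]
  exact Finset.sum_comm

theorem U2 (hW : W.IsWeakBialgebra) (hrep : W.comul W.one = ∑ i ∈ S, e i ⊗ₜ[k] f i) :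
    LinearMap.rTensor H W.comul (W.comul W.one) =
    ∑ i ∈ S, ∑ j ∈ S, (e i ⊗ₜ[k] W.mul (e j) (f i)) ⊗ₜ[k] f j := by
  rw [hW.comul_one_op, hrep]
  simp [map_sum, sum_tmul, tmul_sum, comm_tmul, tensorTensorTensorComm_tmul,
    assoc_symm_tmul, rTensor_tmul, mulT_tmul]
  exact Finset.sum_comm

theorem coassoc₁ (hW : W.IsWeakBialgebra) (hrep : W.comul W.one = ∑ i ∈ S, e i ⊗ₜ[k] f i) :
    LinearMap.lTensor H W.comul (W.comul W.one) =
    ∑ i ∈ S, ∑ j ∈ S, e i ⊗ₜ[k] (W.mul (f i) (e j) ⊗ₜ[k] f j) := by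
  rw [← hW.coassoc W.one, U1 W hW hrep]
  simp [map_sum, assoc_tmul]

theorem sum_counit_f (hW : W.IsWeakBialgebra) (hrep : W.comul W.one = ∑ i ∈ S, e i ⊗ₜ[k] f i) :
    ∑ i ∈ S, W.counit (f i) • e i = W.one := by
  have h := hW.counit_right W.one
  rw [hrep] at h
  simpa [map_sum, lTensor_tmul, rid_tmul] using h

theorem sum_counit_e (hW : W.IsWeakBialgebra) (hrep : W.comul W.one = ∑ i ∈ S, e i ⊗ₜ[k] f i) :
    ∑ i ∈ S, W.counit (e i) • f i = W.one := by
  have h := hW.counit_left W.one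
  rw [hrep] at h
  simpa [map_sum, rTensor_tmul, lid_tmul] using h

theorem εs_one (hW : W.IsWeakBialgebra) (hrep : W.comul W.one = ∑ i ∈ S, e i ⊗ₜ[k] f i) :
    W.εsMap W.one = W.one := by
  rw [εs_apply W hrep]
  simp_rw [hW.one_mul]
  exact sum_counit_f W hW hrep

theorem one_mem_Hs (hW : W.IsWeakBialgebra) (hrep : W.comul W.one = ∑ i ∈ S, e i ⊗ₜ[k] f i) :
    W.one ∈ W.Hs := ⟨W.one, εs_one W hW hrep⟩

end Rep
end WBData
end Aux2
noncomputable section Aux3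
open TensorProduct LinearMap

variable {k : Type} [CommRing k] {H : Type} [AddCommGroup H] [Module k H]

namespace WBData
variable (W : WBData k H) {ι : Type} {S : Finset ι} {e f : ι → H}

theorem mul2_sum_left {α : Type} (s : Finset α) (x : α → H ⊗[k] H) (y : H ⊗[k] H) :
    W.mul₂ (∑ i ∈ s, x i) y = ∑ i ∈ s, W.mul₂ (x i) y := by
  simp [← mul2L_apply, map_sum, LinearMap.sum_apply]

theorem mul_mul_comp (hW : W.IsWeakBialgebra) (g a : H) :
    W.mul (W.mul g a) = W.mul g ∘ₗ W.mul a := by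
  ext z; exact hW.mul_assoc g a z

section Rep
variable (hW : W.IsWeakBialgebra) (hrep : W.comul W.one = ∑ i ∈ S, e i ⊗ₜ[k] f i)

theorem A1 (hW : W.IsWeakBialgebra) (hrep : W.comul W.one = ∑ i ∈ S, e i ⊗ₜ[k] f i)
    (p z : H) : W.counit (W.mul (W.εsMap p) z) = W.counit (W.mul p z) := by
  rw [εs_apply W hrep p, Mop1 W hW hrep p z]
  simp [map_sum, LinearMap.sum_apply, map_smul, LinearMap.smul_apply, smul_eq_mul,
    mul_comm]

theorem A2 (hW : W.IsWeakBialgebra) (hrep : W.comul W.one = ∑ i ∈ S, e i ⊗ₜ[k] f i)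
    (p u : H) : W.counit (W.mul p (W.εtMap u)) = W.counit (W.mul p u) := by
  rw [εt_apply W hrep u, Mop1 W hW hrep p u]
  simp [map_sum, LinearMap.sum_apply, map_smul, LinearMap.smul_apply, smul_eq_mul,
    mul_comm]

theorem K3 (hW : W.IsWeakBialgebra) (hrep : W.comul W.one = ∑ i ∈ S, e i ⊗ₜ[k] f i)
    {g : H} (hg : W.εsMap g = W.one) (z : H) :
    W.counit (W.mul g z) = W.counit z := by
  have h := A1 W hW hrep g z
  rw [hg, hW.one_mul] at h
  exact h.symm

theorem F1 (hW : W.IsWeakBialgebra) (hrep : W.comul W.one = ∑ i ∈ S, e i ⊗ₜ[k] f i)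
    {x : H} (hx : x ∈ W.Hs) :
    W.comul x = ∑ i ∈ S, e i ⊗ₜ[k] W.mul (f i) x := by
  obtain ⟨p, rfl⟩ := hx
  have hU := congrArg ((TensorProduct.rid k (H ⊗[k] H)).toLinearMap
      ∘ₗ lTensor (H ⊗[k] H) (W.counit ∘ₗ W.mul p)) (U1 W hW hrep)
  rw [hrep] at hU
  simp only [map_sum, coe_comp, LinearEquiv.coe_coe, Function.comp_apply,
    rTensor_tmul, lTensor_tmul, rid_tmul, coe_mk] at hU
  calc W.comul (W.εsMap p)
      = ∑ i ∈ S, W.counit (W.mul p (f i)) • W.comul (e i) := by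
        rw [εs_apply W hrep p]; simp [map_sum, map_smul]
    _ = ∑ i ∈ S, ∑ j ∈ S, W.counit (W.mul p (f j)) • (e i ⊗ₜ[k] W.mul (f i) (e j)) := hU
    _ = ∑ i ∈ S, e i ⊗ₜ[k] W.mul (f i) (W.εsMap p) := by
        refine Finset.sum_congr rfl fun i _ => ?_
        rw [εs_apply W hrep p]
        simp [map_sum, map_smul, tmul_sum, tmul_smul]

theorem G4 (hW : W.IsWeakBialgebra) {g : H}
    (hg : W.comul g = W.mul₂ (g ⊗ₜ[k] g) (W.comul W.one))
    (hrep : W.comul W.one = ∑ i ∈ S, e i ⊗ₜ[k] f i) (h : H) :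
    W.comul (W.mul g h) = TensorProduct.map (W.mul g) (W.mul g) (W.comul h) := by
  rw [hW.comul_mul g h, hg, mul2_eq_map, hrep]
  rw [map_sum, mul2_sum_left]
  have : ∀ i, W.mul₂ (TensorProduct.map (W.mul g) (W.mul g) (e i ⊗ₜ[k] f i)) (W.comul h)
      = TensorProduct.map (W.mul g) (W.mul g) (W.mul₂ (e i ⊗ₜ[k] f i) (W.comul h)) := by
    intro i
    simp only [map_tmul, mul2_eq_map]
    rw [mul_mul_comp W hW, mul_mul_comp W hW, TensorProduct.map_comp, coe_comp,
      Function.comp_apply]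
  simp_rw [this, ← map_sum, ← mul2_sum_left, ← hrep, ← hW.comul_mul, hW.one_mul]

theorem C3 (hW : W.IsWeakBialgebra) (hrep : W.comul W.one = ∑ i ∈ S, e i ⊗ₜ[k] f i)
    (h : H) : W.barεsMap (W.εsMap h) = W.εsMap h := by
  have hU := congrArg ((TensorProduct.rid k H).toLinearMap
      ∘ₗ lTensor H (W.counit ∘ₗ W.mul h)
      ∘ₗ rTensor H ((TensorProduct.rid k H).toLinearMap ∘ₗ lTensor H W.counit))
    (U1 W hW hrep)
  rw [hrep] at hU
  simp only [map_sum, coe_comp, LinearEquiv.coe_coe, Function.comp_apply,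
    rTensor_tmul, lTensor_tmul, rid_tmul] at hU
  simp_rw [hW.counit_right] at hU
  rw [barεs_apply W hrep, εs_apply W hrep h]
  have key : ∑ i ∈ S, W.counit (W.mul (f i) (∑ j ∈ S, W.counit (W.mul h (f j)) • e j)) • e i
      = ∑ i ∈ S, ∑ j ∈ S, W.counit (W.mul h (f j)) • W.counit (W.mul (f i) (e j)) • e i := by
    refine Finset.sum_congr rfl fun i _ => ?_
    simp [map_sum, map_smul, smul_eq_mul, Finset.sum_smul, mul_smul]
  rw [key, ← hU]

theorem C4 (hW : W.IsWeakBialgebra) (hrep : W.comul W.one = ∑ i ∈ S, e i ⊗ₜ[k] f i)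
    (h : H) : W.εsMap (W.barεsMap h) = W.barεsMap h := by
  have hU := congrArg ((TensorProduct.rid k H).toLinearMap
      ∘ₗ lTensor H (W.counit ∘ₗ W.mul.flip h)
      ∘ₗ rTensor H ((TensorProduct.rid k H).toLinearMap ∘ₗ lTensor H W.counit))
    (U2 W hW hrep)
  rw [hrep] at hU
  simp only [map_sum, coe_comp, LinearEquiv.coe_coe, Function.comp_apply,
    rTensor_tmul, lTensor_tmul, rid_tmul, flip_apply] at hU
  simp_rw [hW.counit_right] at hU
  rw [εs_apply W hrep, barεs_apply W hrep h]
  have key : ∑ i ∈ S, W.counit (W.mul (∑ j ∈ S, W.counit (W.mul (f j) h) • e j) (f i)) • e i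
      = ∑ i ∈ S, ∑ j ∈ S, W.counit (W.mul (f j) h) • W.counit (W.mul (e j) (f i)) • e i := by
    refine Finset.sum_congr rfl fun i _ => ?_
    simp [map_sum, LinearMap.sum_apply, map_smul, LinearMap.smul_apply, smul_eq_mul,
      Finset.sum_smul, mul_smul]
  rw [key, ← hU]

theorem barεs_mem_Hs (hW : W.IsWeakBialgebra)
    (hrep : W.comul W.one = ∑ i ∈ S, e i ⊗ₜ[k] f i) (h : H) :
    W.barεsMap h ∈ W.Hs := ⟨W.barεsMap h, C4 W hW hrep h⟩

theorem barεs_of_mem_Hs (hW : W.IsWeakBialgebra)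
    (hrep : W.comul W.one = ∑ i ∈ S, e i ⊗ₜ[k] f i) {y : H} (hy : y ∈ W.Hs) :
    W.barεsMap y = y := by
  obtain ⟨p, rfl⟩ := hy
  exact C3 W hW hrep p

end Rep
end WBData
end Aux3
noncomputable section Aux4
open TensorProduct LinearMap

variable {k : Type} [CommRing k] {H : Type} [AddCommGroup H] [Module k H]

namespace WBData
variable (W : WBData k H) {ι : Type} {S : Finset ι} {e f : ι → H}

theorem helper_map_sum {α : Type} (s : Finset α) (A : H →ₗ[k] H) (ψ : α → (H →ₗ[k] H))
    (u : H ⊗[k] H) :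
    TensorProduct.map A (∑ i ∈ s, ψ i) u = ∑ i ∈ s, TensorProduct.map A (ψ i) u := by
  induction u using TensorProduct.induction_on with
  | zero => simp
  | tmul a b => simp [tmul_sum, LinearMap.sum_apply]
  | add u v hu hv => rw [map_add]; simp [hu, hv, Finset.sum_add_distrib]

theorem helper1 (A B : H →ₗ[k] H) (c : H) (u : H ⊗[k] H) :
    TensorProduct.map A (LinearMap.toSpanSingleton k H c ∘ₗ W.counit ∘ₗ B) u
      = (TensorProduct.rid k H) (lTensor H W.counit (TensorProduct.map A B u)) ⊗ₜ[k] c := by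
  induction u using TensorProduct.induction_on with
  | zero => simp
  | tmul a b =>
      simp [toSpanSingleton_apply, lTensor_tmul, rid_tmul, tmul_smul, smul_tmul]
  | add u v hu hv => simp [map_add, hu, hv, add_tmul]

theorem helper2 (φ ψ : H →ₗ[k] k) (u : H ⊗[k] H) :
    (LinearMap.mul' k k) (TensorProduct.map φ ψ ((TensorProduct.comm k H H) u))
      = (LinearMap.mul' k k) (TensorProduct.map ψ φ u) := by
  induction u using TensorProduct.induction_on with
  | zero => simp
  | tmul a b => simp [comm_tmul, mul'_apply, mul_comm]
  | add u v hu hv => simp [map_add, hu, hv]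

section Rep
variable (hW : W.IsWeakBialgebra) (hrep : W.comul W.one = ∑ i ∈ S, e i ⊗ₜ[k] f i)

theorem εt_eq (hrep : W.comul W.one = ∑ i ∈ S, e i ⊗ₜ[k] f i) :
    W.εtMap = ∑ i ∈ S, LinearMap.toSpanSingleton k H (f i) ∘ₗ W.counit ∘ₗ W.mul (e i) := by
  ext u
  rw [εt_apply W hrep u]
  simp [toSpanSingleton_apply]

theorem I1 (hW : W.IsWeakBialgebra) (hrep : W.comul W.one = ∑ i ∈ S, e i ⊗ₜ[k] f i)
    (w : H) : lTensor H W.εtMap (W.comul w) = ∑ i ∈ S, W.mul (e i) w ⊗ₜ[k] f i := by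
  -- Ξ gadget applied to U2
  set Ξ : (H ⊗[k] H) ⊗[k] H →ₗ[k] H ⊗[k] H :=
    rTensor H ((TensorProduct.rid k H).toLinearMap ∘ₗ lTensor H W.counit)
      ∘ₗ rTensor H ((W.mul2L).flip (W.comul w)) with hΞ
  have hU := congrArg Ξ (U2 W hW hrep)
  rw [hrep] at hU
  simp only [hΞ, map_sum, coe_comp, LinearEquiv.coe_coe, Function.comp_apply, rTensor_tmul,
    flip_apply, mul2L_apply] at hU
  -- hU : Σ_i (rid (lTensorε (mul₂ (δ (e i)) (δ w)))) ⊗ f i = Σ_i Σ_j (...)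
  have hL : ∀ a : H, (TensorProduct.rid k H) (lTensor H W.counit (W.mul₂ (W.comul a) (W.comul w)))
      = W.mul a w := by
    intro a
    rw [← hW.comul_mul a w]
    exact hW.counit_right (W.mul a w)
  simp_rw [hL] at hU
  -- now the LHS of the goal
  have h0 := hW.comul_mul W.one w
  rw [hW.one_mul] at h0
  have h1 : W.comul w = ∑ j ∈ S, TensorProduct.map (W.mul (e j)) (W.mul (f j)) (W.comul w) := by
    conv_lhs => rw [h0, hrep]
    rw [mul2_sum_left]
    simp_rw [mul2_eq_map]
  calc lTensor H W.εtMap (W.comul w)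
      = ∑ j ∈ S, TensorProduct.map (W.mul (e j)) (W.εtMap ∘ₗ W.mul (f j)) (W.comul w) := by
        conv_lhs => rw [h1]
        rw [map_sum]
        refine Finset.sum_congr rfl fun j _ => ?_
        have : lTensor H W.εtMap ∘ₗ TensorProduct.map (W.mul (e j)) (W.mul (f j))
            = TensorProduct.map (LinearMap.id ∘ₗ W.mul (e j)) (W.εtMap ∘ₗ W.mul (f j)) := by
          rw [TensorProduct.map_comp]; rfl
        rw [← comp_apply, this, id_comp]
    _ = ∑ j ∈ S, ∑ i ∈ S, TensorProduct.map (W.mul (e j))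
          (LinearMap.toSpanSingleton k H (f i) ∘ₗ W.counit ∘ₗ W.mul (W.mul (e i) (f j)))
          (W.comul w) := by
        refine Finset.sum_congr rfl fun j _ => ?_
        have hcomp : W.εtMap ∘ₗ W.mul (f j)
            = ∑ i ∈ S, LinearMap.toSpanSingleton k H (f i) ∘ₗ W.counit
                ∘ₗ W.mul (W.mul (e i) (f j)) := by
          ext z
          rw [comp_apply, εt_apply W hrep]
          simp [toSpanSingleton_apply, hW.mul_assoc]
        rw [hcomp, helper_map_sum]
    _ = ∑ j ∈ S, ∑ i ∈ S, (TensorProduct.rid k H) (lTensor H W.counit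
          (TensorProduct.map (W.mul (e j)) (W.mul (W.mul (e i) (f j))) (W.comul w))) ⊗ₜ[k] f i := by
        simp_rw [helper1]
    _ = ∑ i ∈ S, W.mul (e i) w ⊗ₜ[k] f i := by
        simp_rw [mul2_eq_map] at hU
        rw [← hU]

theorem C6 (hW : W.IsWeakBialgebra) (hrep : W.comul W.one = ∑ i ∈ S, e i ⊗ₜ[k] f i)
    {x : H} (hx : x ∈ W.Hs) (w : H) :
    (TensorProduct.rid k H) (lTensor H (W.counit ∘ₗ W.mul x) (W.comul w)) = W.mul x w := by
  obtain ⟨p, rfl⟩ := hx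
  have hfA : W.counit ∘ₗ W.mul (W.εsMap p) = W.counit ∘ₗ W.mul p := by
    ext z; exact A1 W hW hrep p z
  have hfB : W.counit ∘ₗ W.mul p = (W.counit ∘ₗ W.mul p) ∘ₗ W.εtMap := by
    ext z; exact (A2 W hW hrep p z).symm
  rw [hfA, hfB, lTensor_comp, comp_apply, I1 W hW hrep w, εs_apply W hrep p]
  simp [map_sum, lTensor_tmul, rid_tmul, LinearMap.sum_apply, LinearMap.smul_apply,
    Function.comp_apply]

end Rep
end WBData
end Aux4
noncomputable section Aux5
open TensorProduct LinearMap

variable {k : Type} [CommRing k] {H : Type} [AddCommGroup H] [Module k H]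

namespace WBData
variable (W : WBData k H) {ι : Type} {S : Finset ι} {e f : ι → H}

section Rep

theorem E1 (hW : W.IsWeakBialgebra) (g u : H) :
    (LinearMap.mul' k k) (TensorProduct.map W.counit (W.counit ∘ₗ W.mul g) (W.comul u))
      = W.counit (W.mul g u) := by
  have h := hW.counit_mul_op g u W.one
  rw [hW.mul_one] at h
  have hf : W.counit ∘ₗ W.mul.flip W.one = W.counit := by
    ext z; simp [flip_apply, hW.mul_one]
  rw [hf] at h
  rw [h, helper2]

theorem K6 (hW : W.IsWeakBialgebra) (hrep : W.comul W.one = ∑ i ∈ S, e i ⊗ₜ[k] f i)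
    (z : H) {x : H} (hx : x ∈ W.Hs) (w : H) :
    (LinearMap.mul' k k) (TensorProduct.map (W.counit ∘ₗ W.mul z) (W.counit ∘ₗ W.mul x)
      (W.comul w)) = W.counit (W.mul z (W.mul x w)) := by
  obtain ⟨p, rfl⟩ := hx
  have hfA : W.counit ∘ₗ W.mul (W.εsMap p) = W.counit ∘ₗ W.mul p := by
    ext a; exact A1 W hW hrep p a
  have hfB : W.counit ∘ₗ W.mul p = (W.counit ∘ₗ W.mul p) ∘ₗ W.εtMap := by
    ext a; exact (A2 W hW hrep p a).symm
  rw [hfA, hfB]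
  have hsplit : TensorProduct.map (W.counit ∘ₗ W.mul z) ((W.counit ∘ₗ W.mul p) ∘ₗ W.εtMap)
      = TensorProduct.map (W.counit ∘ₗ W.mul z) (W.counit ∘ₗ W.mul p) ∘ₗ lTensor H W.εtMap := by
    have h1 : TensorProduct.map (W.counit ∘ₗ W.mul z) ((W.counit ∘ₗ W.mul p) ∘ₗ W.εtMap)
        = TensorProduct.map ((W.counit ∘ₗ W.mul z) ∘ₗ LinearMap.id)
          ((W.counit ∘ₗ W.mul p) ∘ₗ W.εtMap) := by rw [comp_id]
    rw [h1, TensorProduct.map_comp]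
    rfl
  rw [hsplit, comp_apply, I1 W hW hrep w]
  rw [εs_apply W hrep p]
  simp [map_sum, mul'_apply, LinearMap.sum_apply, LinearMap.smul_apply, map_smul,
    smul_eq_mul, mul_comm]

theorem K12 (hW : W.IsWeakBialgebra) (hrep : W.comul W.one = ∑ i ∈ S, e i ⊗ₜ[k] f i)
    {g : H} (hg : W.εsMap g = W.one) {x : H} (hx : x ∈ W.Hs) (w : H) :
    ∑ i ∈ S, (LinearMap.mul' k k) (TensorProduct.map (W.counit ∘ₗ W.mul (e i))
        (W.counit ∘ₗ W.mul g ∘ₗ W.mul (W.mul (f i) x)) (W.comul w))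
      = W.counit (W.mul x w) := by
  have hterm : ∀ i, TensorProduct.map (W.counit ∘ₗ W.mul (e i))
      (W.counit ∘ₗ W.mul g ∘ₗ W.mul (W.mul (f i) x)) (W.comul w)
      = TensorProduct.map W.counit (W.counit ∘ₗ W.mul g)
          (TensorProduct.map (W.mul (e i)) (W.mul (W.mul (f i) x)) (W.comul w)) := by
    intro i
    conv_rhs => rw [← comp_apply, ← TensorProduct.map_comp]
    rfl
  simp_rw [hterm, ← map_sum]
  have hsum : ∑ i ∈ S, TensorProduct.map (W.mul (e i)) (W.mul (W.mul (f i) x)) (W.comul w)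
      = W.comul (W.mul x w) := by
    simp_rw [← mul2_eq_map]
    rw [← mul2_sum_left, ← F1 W hW hrep hx, ← hW.comul_mul]
  rw [hsum, E1 W hW, K3 W hW hrep hg]

theorem K8R (hW : W.IsWeakBialgebra) (hrep : W.comul W.one = ∑ i ∈ S, e i ⊗ₜ[k] f i)
    {x : H} (hx : x ∈ W.Hs) (w : H) :
    ∑ i ∈ S, (TensorProduct.lid k H) (TensorProduct.map (W.counit ∘ₗ W.mul (e i))
        (W.mul (W.mul (f i) x)) (W.comul w))
      = W.mul x w := by
  have hterm : ∀ i, TensorProduct.map (W.counit ∘ₗ W.mul (e i))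
      (W.mul (W.mul (f i) x)) (W.comul w)
      = TensorProduct.map W.counit LinearMap.id
          (TensorProduct.map (W.mul (e i)) (W.mul (W.mul (f i) x)) (W.comul w)) := by
    intro i
    conv_rhs => rw [← comp_apply, ← TensorProduct.map_comp, id_comp]
  simp_rw [hterm, ← map_sum]
  have hsum : ∑ i ∈ S, TensorProduct.map (W.mul (e i)) (W.mul (W.mul (f i) x)) (W.comul w)
      = W.comul (W.mul x w) := by
    simp_rw [← mul2_eq_map]
    rw [← mul2_sum_left, ← F1 W hW hrep hx, ← hW.comul_mul]
  rw [hsum]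
  exact hW.counit_left (W.mul x w)

end Rep
end WBData
end Aux5
noncomputable section Aux6
open TensorProduct LinearMap

variable {k : Type} [CommRing k] {H : Type} [AddCommGroup H] [Module k H]

namespace WBData
variable (W : WBData k H) {ι : Type} {S : Finset ι} {e f : ι → H}

/-- The left-unit constraint map for the coaction `βg g'`. -/
def ΛW (g' : H) : H ⊗[k] H →ₗ[k] H :=
  (TensorProduct.rid k H).toLinearMap
    ∘ₗ LinearMap.lTensor H (W.counit ∘ₗ W.mulT)
    ∘ₗ (TensorProduct.assoc k H H H).toLinearMap
    ∘ₗ LinearMap.rTensor H (TensorProduct.comm k H H).toLinearMap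
    ∘ₗ (TensorProduct.assoc k H H H).symm.toLinearMap
    ∘ₗ LinearMap.lTensor H (W.βg g')

theorem βg_rep {α : Type} {s' : Finset α} {r q : α → H} {b : H}
    (hb : W.comul b = ∑ t ∈ s', r t ⊗ₜ[k] q t) (g : H) :
    W.βg g b = ∑ t ∈ s', r t ⊗ₜ[k] W.mul g (q t) := by
  simp [WBData.βg, hb, map_sum, lTensor_tmul]

theorem ΛW_rep (g' : H) {α : Type} {s' : Finset α} {r q : α → H} {b : H}
    (hb : W.comul b = ∑ t ∈ s', r t ⊗ₜ[k] q t) (a : H) :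
    W.ΛW g' (a ⊗ₜ[k] b) = ∑ t ∈ s', W.counit (W.mul a (W.mul g' (q t))) • r t := by
  simp [WBData.ΛW, βg_rep W hb g', map_sum, tmul_sum, assoc_symm_tmul, rTensor_tmul,
    comm_tmul, assoc_tmul, lTensor_tmul, rid_tmul, mulT_tmul]

theorem truncP_rep (g g' : H) {α β' : Type} {sa : Finset α} {sb : Finset β'}
    {r q : α → H} {r' q' : β' → H} {a b : H}
    (ha : W.comul a = ∑ i ∈ sa, r i ⊗ₜ[k] q i)
    (hb : W.comul b = ∑ j ∈ sb, r' j ⊗ₜ[k] q' j) :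
    W.truncP (W.βg g) (W.βg g') (a ⊗ₜ[k] b)
      = ∑ i ∈ sa, ∑ j ∈ sb,
          W.counit (W.mul (W.mul g (q i)) (W.mul g' (q' j))) • (r i ⊗ₜ[k] r' j) := by
  simp [WBData.truncP, βg_rep W ha g, βg_rep W hb g', map_sum, sum_tmul, tmul_sum,
    tensorTensorTensorComm_tmul, lTensor_tmul, rid_tmul, mulT_tmul]
  exact Finset.sum_comm

theorem βtens_rep (g g' : H) {α β' : Type} {sa : Finset α} {sb : Finset β'}
    {r q : α → H} {r' q' : β' → H} {a b : H}
    (ha : W.comul a = ∑ i ∈ sa, r i ⊗ₜ[k] q i)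
    (hb : W.comul b = ∑ j ∈ sb, r' j ⊗ₜ[k] q' j) :
    W.βtens (W.βg g) (W.βg g') (a ⊗ₜ[k] b)
      = ∑ i ∈ sa, ∑ j ∈ sb,
          (r i ⊗ₜ[k] r' j) ⊗ₜ[k] W.mul (W.mul g (q i)) (W.mul g' (q' j)) := by
  simp [WBData.βtens, βg_rep W ha g, βg_rep W hb g', map_sum, sum_tmul, tmul_sum,
    tensorTensorTensorComm_tmul, lTensor_tmul, mulT_tmul]
  exact Finset.sum_comm

section Rep

theorem SPLIT (hW : W.IsWeakBialgebra) (hrep : W.comul W.one = ∑ i ∈ S, e i ⊗ₜ[k] f i)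
    (c d : H) :
    ∑ j ∈ S, W.counit (W.mul c (W.mul (f j) d)) • e j
      = ∑ l ∈ S, W.counit (W.mul c (f l)) • W.barεsMap (W.mul (e l) d) := by
  set φ : H ⊗[k] H →ₗ[k] k :=
    (LinearMap.mul' k k) ∘ₗ TensorProduct.map (W.counit ∘ₗ W.mul c) (W.counit ∘ₗ W.mul.flip d)
      ∘ₗ (TensorProduct.comm k H H).toLinearMap with hφ
  set Θ : H ⊗[k] (H ⊗[k] H) →ₗ[k] H :=
    (TensorProduct.rid k H).toLinearMap ∘ₗ lTensor H φ with hΘ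
  have hid := congrArg Θ (coassoc₁ W hW hrep)
  rw [hrep] at hid
  simp only [hΘ, hφ, map_sum, coe_comp, LinearEquiv.coe_coe, Function.comp_apply,
    lTensor_tmul, rid_tmul, comm_tmul, map_tmul, mul'_apply, flip_apply] at hid
  -- hid : Σ_j (φ (δ (f j))) • e j = Σ_{j,l} (ε(c (f l)) * ε((f j e l) d)) • e j
  have hL : ∀ j, W.counit (W.mul c (W.mul (f j) d))
      = (LinearMap.mul' k k) (TensorProduct.map (W.counit ∘ₗ W.mul c)
          (W.counit ∘ₗ W.mul.flip d) ((TensorProduct.comm k H H) (W.comul (f j)))) := by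
    intro j
    have h := hW.counit_mul_op c (f j) d
    rw [hW.mul_assoc] at h
    exact h
  calc ∑ j ∈ S, W.counit (W.mul c (W.mul (f j) d)) • e j
      = ∑ j ∈ S, (LinearMap.mul' k k) (TensorProduct.map (W.counit ∘ₗ W.mul c)
          (W.counit ∘ₗ W.mul.flip d) ((TensorProduct.comm k H H) (W.comul (f j)))) • e j := by
        simp_rw [hL]
    _ = ∑ j ∈ S, ∑ l ∈ S, (W.counit (W.mul (W.mul (f j) (e l)) d) *
          W.counit (W.mul c (f l))) • e j := by
        rw [hid]
        refine Finset.sum_congr rfl fun j _ => Finset.sum_congr rfl fun l _ => ?_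
        ring_nf
    _ = ∑ l ∈ S, W.counit (W.mul c (f l)) • W.barεsMap (W.mul (e l) d) := by
        rw [Finset.sum_comm]
        refine Finset.sum_congr rfl fun l _ => ?_
        rw [barεs_apply W hrep, Finset.smul_sum]
        refine Finset.sum_congr rfl fun j _ => ?_
        rw [hW.mul_assoc, smul_smul, mul_comm]
end Rep
end WBData
end Aux6
noncomputable section Aux7
open TensorProduct LinearMap

variable {k : Type} [CommRing k] {H : Type} [AddCommGroup H] [Module k H]

namespace WBData
variable (W : WBData k H) {ι : Type} {S : Finset ι} {e f : ι → H}

theorem ΛW_eval (g' a b : H) : W.ΛW g' (a ⊗ₜ[k] b)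
    = (TensorProduct.rid k H) (lTensor H (W.counit ∘ₗ W.mul a ∘ₗ W.mul g') (W.comul b)) := by
  show ((TensorProduct.rid k H).toLinearMap
    ∘ₗ LinearMap.lTensor H (W.counit ∘ₗ W.mulT)
    ∘ₗ (TensorProduct.assoc k H H H).toLinearMap
    ∘ₗ LinearMap.rTensor H (TensorProduct.comm k H H).toLinearMap
    ∘ₗ (TensorProduct.assoc k H H H).symm.toLinearMap)
      (a ⊗ₜ[k] (lTensor H (W.mul g') (W.comul b))) = _
  generalize W.comul b = u
  induction u using TensorProduct.induction_on with
  | zero => simp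
  | tmul p q =>
      simp [lTensor_tmul, assoc_symm_tmul, rTensor_tmul, comm_tmul, assoc_tmul,
        rid_tmul, mulT_tmul]
  | add u v hu hv => simp only [map_add, tmul_add] at *; rw [hu, hv]

theorem map_comp_collapse (φ ψ : H →ₗ[k] k) (A B : H →ₗ[k] H) (u : H ⊗[k] H) :
    TensorProduct.map φ ψ (TensorProduct.map A B u) = TensorProduct.map (φ ∘ₗ A) (ψ ∘ₗ B) u := by
  induction u using TensorProduct.induction_on with
  | zero => simp
  | tmul p q => simp [map_tmul]
  | add u v hu hv => simp only [map_add]; rw [hu, hv]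

theorem Xi_eval_left (φ₁ φ₂ : H →ₗ[k] k) (u : H ⊗[k] H) (c : H) :
    ((TensorProduct.rid k H).toLinearMap
        ∘ₗ lTensor H ((LinearMap.mul' k k) ∘ₗ TensorProduct.map φ₁ φ₂)
        ∘ₗ (TensorProduct.assoc k H H H).toLinearMap) (u ⊗ₜ[k] c)
      = φ₂ c • (TensorProduct.rid k H) (lTensor H φ₁ u) := by
  induction u using TensorProduct.induction_on with
  | zero => simp
  | tmul p q =>
      simp [assoc_tmul, lTensor_tmul, rid_tmul, mul'_apply, smul_smul, mul_comm]
  | add u v hu hv => simp only [map_add, add_tmul, smul_add] at *; rw [hu, hv]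

theorem Xi_eval_right (φ₁ φ₂ : H →ₗ[k] k) (a : H) (A : H ⊗[k] H) :
    ((TensorProduct.rid k H).toLinearMap
        ∘ₗ lTensor H ((LinearMap.mul' k k) ∘ₗ TensorProduct.map φ₁ φ₂)
        ∘ₗ (TensorProduct.assoc k H H H).toLinearMap)
      ((TensorProduct.assoc k H H H).symm (a ⊗ₜ[k] A))
      = (LinearMap.mul' k k) (TensorProduct.map φ₁ φ₂ A) • a := by
  simp [LinearEquiv.apply_symm_apply, lTensor_tmul, rid_tmul]

section Rep

theorem C2 (hW : W.IsWeakBialgebra) (hrep : W.comul W.one = ∑ i ∈ S, e i ⊗ₜ[k] f i)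
    {g : H} (hg : W.εsMap g = W.one) {y : H} (hy : y ∈ W.Hs) :
    ∑ j ∈ S, W.counit (W.mul g (W.mul (f j) y)) • e j = y := by
  rw [SPLIT W hW hrep g y]
  have h : ∑ l ∈ S, W.counit (W.mul g (f l)) • W.barεsMap (W.mul (e l) y)
      = W.barεsMap (W.mul (W.εsMap g) y) := by
    rw [εs_apply W hrep g]
    simp [map_sum, LinearMap.sum_apply, map_smul, LinearMap.smul_apply]
  rw [h, hg, hW.one_mul, barεs_of_mem_Hs W hW hrep hy]

theorem K14 (hW : W.IsWeakBialgebra) (hrep : W.comul W.one = ∑ i ∈ S, e i ⊗ₜ[k] f i)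
    (c d : H) : (∑ j ∈ S, W.counit (W.mul c (W.mul (f j) d)) • e j) ∈ W.Hs := by
  rw [SPLIT W hW hrep c d]
  exact Submodule.sum_mem _ fun l _ => Submodule.smul_mem _ _ (barεs_mem_Hs W hW hrep _)

theorem L1 (hW : W.IsWeakBialgebra) (hrep : W.comul W.one = ∑ i ∈ S, e i ⊗ₜ[k] f i)
    {g₁ g₂ : H} (hg₁s : W.εsMap g₁ = W.one)
    (hg₂r : W.comul g₂ = W.mul₂ (g₂ ⊗ₜ[k] g₂) (W.comul W.one))
    {x v : H} (hx : x ∈ W.Hs) (hv : v ∈ W.Hs) :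
    W.ΛW g₂ (W.truncP (W.βg g₁) (W.βg g₂) (x ⊗ₜ[k] v))
      = ∑ j ∈ S, W.counit (W.mul x (W.mul g₂ (W.mul (f j) v))) • e j := by
  have hFx := F1 W hW hrep hx
  have hFv := F1 W hW hrep hv
  rw [truncP_rep W g₁ g₂ hFx hFv]
  -- abbreviations
  set Φ₁ : ι → (H →ₗ[k] k) := fun i => W.counit ∘ₗ W.mul (e i) ∘ₗ W.mul g₂ with hΦ₁
  set Φ₂ : ι → (H →ₗ[k] k) := fun i =>
    W.counit ∘ₗ W.mul (W.mul g₁ (W.mul (f i) x)) ∘ₗ W.mul g₂ with hΦ₂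
  set Ξ : ι → ((H ⊗[k] H) ⊗[k] H →ₗ[k] H) := fun i =>
    (TensorProduct.rid k H).toLinearMap
      ∘ₗ lTensor H ((LinearMap.mul' k k) ∘ₗ TensorProduct.map (Φ₁ i) (Φ₂ i))
      ∘ₗ (TensorProduct.assoc k H H H).toLinearMap with hΞ
  -- the coassociativity identity at v
  have hXid : ∑ j ∈ S, (W.comul (e j)) ⊗ₜ[k] (W.mul (f j) v)
      = ∑ j ∈ S, (TensorProduct.assoc k H H H).symm (e j ⊗ₜ[k] W.comul (W.mul (f j) v)) := by
    have h1 : rTensor H W.comul (W.comul v) = ∑ j ∈ S, (W.comul (e j)) ⊗ₜ[k] (W.mul (f j) v) := by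
      rw [hFv]; simp [map_sum, rTensor_tmul]
    have h2 : lTensor H W.comul (W.comul v)
        = ∑ j ∈ S, e j ⊗ₜ[k] W.comul (W.mul (f j) v) := by
      rw [hFv]; simp [map_sum, lTensor_tmul]
    have h3 := hW.coassoc v
    rw [h1, h2] at h3
    calc ∑ j ∈ S, (W.comul (e j)) ⊗ₜ[k] (W.mul (f j) v)
        = (TensorProduct.assoc k H H H).symm
            ((TensorProduct.assoc k H H H) (∑ j ∈ S, (W.comul (e j)) ⊗ₜ[k] (W.mul (f j) v))) := by
          rw [LinearEquiv.symm_apply_apply]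
      _ = ∑ j ∈ S, (TensorProduct.assoc k H H H).symm (e j ⊗ₜ[k] W.comul (W.mul (f j) v)) := by
          rw [h3, map_sum]
  rw [map_sum]
  simp_rw [map_sum, map_smul]
  calc ∑ i ∈ S, ∑ j ∈ S,
        W.counit (W.mul (W.mul g₁ (W.mul (f i) x)) (W.mul g₂ (W.mul (f j) v)))
          • W.ΛW g₂ (e i ⊗ₜ[k] e j)
      = ∑ i ∈ S, Ξ i (∑ j ∈ S, (W.comul (e j)) ⊗ₜ[k] (W.mul (f j) v)) := by
        refine Finset.sum_congr rfl fun i _ => ?_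
        rw [map_sum]
        refine Finset.sum_congr rfl fun j _ => ?_
        rw [hΞ]
        rw [Xi_eval_left]
        rw [ΛW_eval]
        simp only [hΦ₁, hΦ₂, coe_comp, Function.comp_apply]
    _ = ∑ i ∈ S, ∑ j ∈ S,
          (LinearMap.mul' k k) (TensorProduct.map (Φ₁ i) (Φ₂ i) (W.comul (W.mul (f j) v))) • e j := by
        refine Finset.sum_congr rfl fun i _ => ?_
        rw [hXid, map_sum]
        refine Finset.sum_congr rfl fun j _ => ?_
        rw [hΞ, Xi_eval_right]
    _ = ∑ j ∈ S, ∑ i ∈ S,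
          (LinearMap.mul' k k) (TensorProduct.map (W.counit ∘ₗ W.mul (e i))
            (W.counit ∘ₗ W.mul g₁ ∘ₗ W.mul (W.mul (f i) x))
            (W.comul (W.mul g₂ (W.mul (f j) v)))) • e j := by
        rw [Finset.sum_comm]
        refine Finset.sum_congr rfl fun j _ => Finset.sum_congr rfl fun i _ => ?_
        congr 1
        conv_rhs => rw [G4 W hW hg₂r hrep (W.mul (f j) v)]
        rw [map_comp_collapse]
        simp only [hΦ₁, hΦ₂, mul_mul_comp W hW]
        rfl
    _ = ∑ j ∈ S, W.counit (W.mul x (W.mul g₂ (W.mul (f j) v))) • e j := by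
        refine Finset.sum_congr rfl fun j _ => ?_
        rw [← Finset.sum_smul, K12 W hW hrep hg₁s hx]

end Rep
end WBData
end Aux7
noncomputable section Aux8
open TensorProduct LinearMap

variable {k : Type} [CommRing k] {H : Type} [AddCommGroup H] [Module k H]

namespace WBData
variable (W : WBData k H) {ι : Type} {S : Finset ι} {e f : ι → H}

section Rep

theorem Yid (hW : W.IsWeakBialgebra) (hrep : W.comul W.one = ∑ i ∈ S, e i ⊗ₜ[k] f i)
    {v : H} (hv : v ∈ W.Hs) :
    ∑ j ∈ S, e j ⊗ₜ[k] W.comul (W.mul (f j) v)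
      = ∑ j ∈ S, ∑ l ∈ S, e j ⊗ₜ[k] (W.mul (f j) (e l) ⊗ₜ[k] W.mul (f l) v) := by
  have hFv := F1 W hW hrep hv
  have h1 : lTensor H W.comul (W.comul v) = ∑ j ∈ S, e j ⊗ₜ[k] W.comul (W.mul (f j) v) := by
    rw [hFv]; simp [map_sum, lTensor_tmul]
  have h2 : rTensor H W.comul (W.comul v)
      = ∑ j ∈ S, (W.comul (e j)) ⊗ₜ[k] (W.mul (f j) v) := by
    rw [hFv]; simp [map_sum, rTensor_tmul]
  -- apply (id ⊗ ·v) to U1, then assoc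
  have hU := congrArg (lTensor (H ⊗[k] H) (W.mul.flip v)) (U1 W hW hrep)
  rw [hrep] at hU
  simp only [map_sum, lTensor_tmul, rTensor_tmul, flip_apply] at hU
  -- hU : Σ_j δ(e j) ⊗ (f j v) = Σ_{j,l} (e j ⊗ (f j e l)) ⊗ (f l v)
  have h3 := hW.coassoc v
  rw [h1, h2] at h3
  rw [← h3, hU]
  simp [map_sum, assoc_tmul]

theorem S3 (hW : W.IsWeakBialgebra) (hrep : W.comul W.one = ∑ i ∈ S, e i ⊗ₜ[k] f i)
    (g₁ : H) {g₂ : H} (hg₂r : W.comul g₂ = W.mul₂ (g₂ ⊗ₜ[k] g₂) (W.comul W.one))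
    {x v : H} (hx : x ∈ W.Hs) (hv : v ∈ W.Hs) :
    W.truncP (W.βg g₁) (W.βg g₂)
        (W.one ⊗ₜ[k] (∑ j ∈ S, W.counit (W.mul x (W.mul g₂ (W.mul (f j) v))) • e j))
      = W.truncP (W.βg g₁) (W.βg g₂) (x ⊗ₜ[k] v) := by
  have hFx := F1 W hW hrep hx
  have hFv := F1 W hW hrep hv
  set y : H := ∑ j ∈ S, W.counit (W.mul x (W.mul g₂ (W.mul (f j) v))) • e j with hy
  have hymem : y ∈ W.Hs := by
    have h : y = ∑ j ∈ S, W.counit (W.mul (W.mul x g₂) (W.mul (f j) v)) • e j := by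
      rw [hy]; simp_rw [hW.mul_assoc]
    rw [h]; exact K14 W hW hrep (W.mul x g₂) v
  have hFy := F1 W hW hrep hymem
  -- gadgets
  set ψ₁ : ι → (H →ₗ[k] k) := fun i => W.counit ∘ₗ W.mul (W.mul g₁ (f i)) ∘ₗ W.mul g₂ with hψ₁
  set ψ₂ : H →ₗ[k] k := W.counit ∘ₗ W.mul x ∘ₗ W.mul g₂ with hψ₂
  set χ : ι → (H ⊗[k] (H ⊗[k] H) →ₗ[k] H ⊗[k] H) := fun i =>
    (TensorProduct.mk k H H (e i)) ∘ₗ (TensorProduct.rid k H).toLinearMap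
      ∘ₗ lTensor H ((LinearMap.mul' k k) ∘ₗ TensorProduct.map (ψ₁ i) ψ₂) with hχ
  have hχeval : ∀ i (a : H) (u : H ⊗[k] H), χ i (a ⊗ₜ[k] u)
      = ((LinearMap.mul' k k) (TensorProduct.map (ψ₁ i) ψ₂ u)) • (e i ⊗ₜ[k] a) := by
    intro i a u
    simp [hχ, lTensor_tmul, rid_tmul, mk_apply, tmul_smul]
  -- RHS to triple sum
  have hRHS : W.truncP (W.βg g₁) (W.βg g₂) (x ⊗ₜ[k] v)
      = ∑ i ∈ S, ∑ j ∈ S, ∑ l ∈ S,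
          (W.counit (W.mul (W.mul g₁ (f i)) (W.mul g₂ (W.mul (f j) (e l)))) *
            W.counit (W.mul x (W.mul g₂ (W.mul (f l) v)))) • (e i ⊗ₜ[k] e j) := by
    rw [truncP_rep W g₁ g₂ hFx hFv]
    calc ∑ i ∈ S, ∑ j ∈ S,
          W.counit (W.mul (W.mul g₁ (W.mul (f i) x)) (W.mul g₂ (W.mul (f j) v)))
            • (e i ⊗ₜ[k] e j)
        = ∑ i ∈ S, χ i (∑ j ∈ S, e j ⊗ₜ[k] W.comul (W.mul (f j) v)) := by
          refine Finset.sum_congr rfl fun i _ => ?_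
          rw [map_sum]
          refine Finset.sum_congr rfl fun j _ => ?_
          rw [hχeval]
          congr 1
          have hz : W.mul (W.mul g₁ (W.mul (f i) x)) (W.mul g₂ (W.mul (f j) v))
              = W.mul (W.mul g₁ (f i)) (W.mul x (W.mul g₂ (W.mul (f j) v))) := by
            rw [← hW.mul_assoc g₁ (f i) x, hW.mul_assoc]
          rw [hz, ← K6 W hW hrep (W.mul g₁ (f i)) hx (W.mul g₂ (W.mul (f j) v))]
          conv_lhs => rw [G4 W hW hg₂r hrep (W.mul (f j) v)]
          rw [map_comp_collapse, hψ₁, hψ₂]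
          rfl
      _ = ∑ i ∈ S, χ i (∑ j ∈ S, ∑ l ∈ S,
            e j ⊗ₜ[k] (W.mul (f j) (e l) ⊗ₜ[k] W.mul (f l) v)) := by
          rw [Yid W hW hrep hv]
      _ = ∑ i ∈ S, ∑ j ∈ S, ∑ l ∈ S,
            (W.counit (W.mul (W.mul g₁ (f i)) (W.mul g₂ (W.mul (f j) (e l)))) *
              W.counit (W.mul x (W.mul g₂ (W.mul (f l) v)))) • (e i ⊗ₜ[k] e j) := by
          refine Finset.sum_congr rfl fun i _ => ?_
          rw [map_sum]
          refine Finset.sum_congr rfl fun j _ => ?_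
          rw [map_sum]
          refine Finset.sum_congr rfl fun l _ => ?_
          rw [hχeval]
          simp [hψ₁, hψ₂, mul'_apply]
  -- LHS to the same triple sum
  have hone : W.comul W.one = ∑ i ∈ S, e i ⊗ₜ[k] f i := hrep
  have hLHS : W.truncP (W.βg g₁) (W.βg g₂) (W.one ⊗ₜ[k] y)
      = ∑ i ∈ S, ∑ j ∈ S, ∑ l ∈ S,
          (W.counit (W.mul (W.mul g₁ (f i)) (W.mul g₂ (W.mul (f j) (e l)))) *
            W.counit (W.mul x (W.mul g₂ (W.mul (f l) v)))) • (e i ⊗ₜ[k] e j) := by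
    rw [truncP_rep W g₁ g₂ hone hFy]
    refine Finset.sum_congr rfl fun i _ => Finset.sum_congr rfl fun j _ => ?_
    have hexp : W.mul (f j) y = ∑ l ∈ S,
        W.counit (W.mul x (W.mul g₂ (W.mul (f l) v))) • W.mul (f j) (e l) := by
      rw [hy]; simp [map_sum, map_smul]
    rw [hexp]
    simp only [map_sum, map_smul, smul_eq_mul, Finset.mul_sum, Finset.sum_smul, smul_smul]
    refine Finset.sum_congr rfl fun l _ => ?_
    rw [mul_comm]
  rw [hLHS, hRHS]

end Rep
end WBData
end Aux8
noncomputable section Aux9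
open TensorProduct LinearMap

variable {k : Type} [CommRing k] {H : Type} [AddCommGroup H] [Module k H]

namespace WBData
variable (W : WBData k H) {ι : Type} {S : Finset ι} {e f : ι → H}

theorem mul2_eq_map_right (c d : H) (u : H ⊗[k] H) :
    W.mul₂ u (c ⊗ₜ[k] d) = TensorProduct.map (W.mul.flip c) (W.mul.flip d) u := by
  rw [← mul2L_apply]
  induction u using TensorProduct.induction_on with
  | zero => simp [WBData.mul₂]
  | tmul a b => simp [mul2L_apply, mul2_tmul, flip_apply]
  | add u v hu hv => simp only [map_add, LinearMap.add_apply] at *; rw [hu, hv]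

section Rep

theorem U1v (hW : W.IsWeakBialgebra) (hrep : W.comul W.one = ∑ i ∈ S, e i ⊗ₜ[k] f i)
    (d : H) :
    ∑ j ∈ S, (W.comul (e j)) ⊗ₜ[k] (W.mul (f j) d)
      = ∑ j ∈ S, ∑ l ∈ S, (e j ⊗ₜ[k] W.mul (f j) (e l)) ⊗ₜ[k] (W.mul (f l) d) := by
  have hU := congrArg (lTensor (H ⊗[k] H) (W.mul.flip d)) (U1 W hW hrep)
  rw [hrep] at hU
  simpa [map_sum, lTensor_tmul, rTensor_tmul, flip_apply] using hU

theorem L3 (hW : W.IsWeakBialgebra) (hrep : W.comul W.one = ∑ i ∈ S, e i ⊗ₜ[k] f i)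
    {g₁ g₂ : H}
    (hg₁r : W.comul g₁ = W.mul₂ (g₁ ⊗ₜ[k] g₁) (W.comul W.one))
    (hg₂r : W.comul g₂ = W.mul₂ (g₂ ⊗ₜ[k] g₂) (W.comul W.one))
    {x v : H} (hx : x ∈ W.Hs) (hv : v ∈ W.Hs) :
    W.βtens (W.βg g₁) (W.βg g₂) (W.truncP (W.βg g₁) (W.βg g₂) (x ⊗ₜ[k] v))
      = W.βtens (W.βg g₁) (W.βg g₂) (x ⊗ₜ[k] v) := by
  have hFx := F1 W hW hrep hx
  have hFv := F1 W hW hrep hv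
  set Θ₂ : (H ⊗[k] H) ⊗[k] (H ⊗[k] H) →ₗ[k] (H ⊗[k] H) ⊗[k] H :=
    lTensor (H ⊗[k] H) W.mulT ∘ₗ (TensorProduct.tensorTensorTensorComm k H H H H).toLinearMap
    with hΘ₂
  have hβt : ∀ a b : H, W.βtens (W.βg g₁) (W.βg g₂) (a ⊗ₜ[k] b)
      = Θ₂ (W.βg g₁ a ⊗ₜ[k] W.βg g₂ b) := by
    intro a b
    simp only [WBData.βtens, hΘ₂, coe_comp, LinearEquiv.coe_coe, Function.comp_apply, map_tmul]
  have hΘeval : ∀ p q r s : H, Θ₂ ((p ⊗ₜ[k] q) ⊗ₜ[k] (r ⊗ₜ[k] s))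
      = (p ⊗ₜ[k] r) ⊗ₜ[k] W.mul q s := by
    intro p q r s
    simp [hΘ₂, tensorTensorTensorComm_tmul, lTensor_tmul, mulT_tmul]
  -- σ gadget
  set σL : H ⊗[k] H → (H ⊗[k] H →ₗ[k] H) := fun u =>
    (TensorProduct.rid k H).toLinearMap ∘ₗ lTensor H W.counit
      ∘ₗ W.mul2L (TensorProduct.map (W.mul g₁) (W.mul g₁) u)
      ∘ₗ TensorProduct.map (W.mul g₂) (W.mul g₂) with hσL
  have hσeval : ∀ (u : H ⊗[k] H) (A B : H), σL u (A ⊗ₜ[k] B)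
      = (TensorProduct.rid k H) (lTensor H W.counit
          (W.mul₂ (TensorProduct.map (W.mul g₁) (W.mul g₁) u)
            (W.mul g₂ A ⊗ₜ[k] W.mul g₂ B))) := by
    intro u A B
    simp [hσL, mul2L_apply]
  have hσcomul : ∀ a b : H, σL (W.comul a) (W.comul b)
      = W.mul (W.mul g₁ a) (W.mul g₂ b) := by
    intro a b
    have h1 : TensorProduct.map (W.mul g₁) (W.mul g₁) (W.comul a) = W.comul (W.mul g₁ a) :=
      (G4 W hW hg₁r hrep a).symm
    have h2 : TensorProduct.map (W.mul g₂) (W.mul g₂) (W.comul b) = W.comul (W.mul g₂ b) :=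
      (G4 W hW hg₂r hrep b).symm
    simp only [hσL, coe_comp, LinearEquiv.coe_coe, Function.comp_apply, h1, h2, mul2L_apply]
    rw [← hW.comul_mul]
    exact hW.counit_right _
  -- Stage A : resolve the j-slot
  have stageA : W.βtens (W.βg g₁) (W.βg g₂) (W.truncP (W.βg g₁) (W.βg g₂) (x ⊗ₜ[k] v))
      = ∑ i ∈ S, ∑ j ∈ S, ∑ l ∈ S,
          W.counit (W.mul (W.mul g₁ (W.mul (f i) x)) (W.mul g₂ (W.mul (f l) v)))
            • Θ₂ (W.βg g₁ (e i) ⊗ₜ[k] (e j ⊗ₜ[k] W.mul g₂ (W.mul (f j) (e l)))) := by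
    rw [truncP_rep W g₁ g₂ hFx hFv, map_sum]
    refine Finset.sum_congr rfl fun i _ => ?_
    rw [map_sum]
    simp_rw [map_smul, hβt]
    set Gi : (H ⊗[k] H) ⊗[k] H →ₗ[k] (H ⊗[k] H) ⊗[k] H :=
      (TensorProduct.rid k ((H ⊗[k] H) ⊗[k] H)).toLinearMap
        ∘ₗ TensorProduct.map
            (Θ₂ ∘ₗ TensorProduct.mk k (H ⊗[k] H) (H ⊗[k] H) (W.βg g₁ (e i))
              ∘ₗ lTensor H (W.mul g₂))
            (W.counit ∘ₗ W.mul (W.mul g₁ (W.mul (f i) x)) ∘ₗ W.mul g₂) with hGi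
    have hGieval : ∀ (u : H ⊗[k] H) (c : H), Gi (u ⊗ₜ[k] c)
        = W.counit (W.mul (W.mul g₁ (W.mul (f i) x)) (W.mul g₂ c))
            • Θ₂ (W.βg g₁ (e i) ⊗ₜ[k] lTensor H (W.mul g₂) u) := by
      intro u c
      simp [hGi, map_tmul, rid_tmul, mk_apply]
    have hA1 : ∑ j ∈ S,
        W.counit (W.mul (W.mul g₁ (W.mul (f i) x)) (W.mul g₂ (W.mul (f j) v)))
          • Θ₂ (W.βg g₁ (e i) ⊗ₜ[k] W.βg g₂ (e j))
        = Gi (∑ j ∈ S, (W.comul (e j)) ⊗ₜ[k] (W.mul (f j) v)) := by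
      rw [map_sum]
      refine Finset.sum_congr rfl fun j _ => ?_
      rw [hGieval]
      rfl
    rw [hA1, U1v W hW hrep v, map_sum]
    refine Finset.sum_congr rfl fun j _ => ?_
    rw [map_sum]
    refine Finset.sum_congr rfl fun l _ => ?_
    rw [hGieval]
    simp [lTensor_tmul]
  -- Stage B : resolve the i-slot
  have stageB : ∀ j l : ι,
      ∑ i ∈ S, W.counit (W.mul (W.mul g₁ (W.mul (f i) x)) (W.mul g₂ (W.mul (f l) v)))
          • Θ₂ (W.βg g₁ (e i) ⊗ₜ[k] (e j ⊗ₜ[k] W.mul g₂ (W.mul (f j) (e l))))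
        = ∑ i ∈ S, ∑ m ∈ S,
            W.counit (W.mul (W.mul g₁ (W.mul (f m) x)) (W.mul g₂ (W.mul (f l) v)))
              • Θ₂ ((e i ⊗ₜ[k] W.mul g₁ (W.mul (f i) (e m)))
                  ⊗ₜ[k] (e j ⊗ₜ[k] W.mul g₂ (W.mul (f j) (e l)))) := by
    intro j l
    set E : H ⊗[k] H := e j ⊗ₜ[k] W.mul g₂ (W.mul (f j) (e l)) with hE
    set Mjl : (H ⊗[k] H) ⊗[k] H →ₗ[k] (H ⊗[k] H) ⊗[k] H :=
      (TensorProduct.rid k ((H ⊗[k] H) ⊗[k] H)).toLinearMap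
        ∘ₗ TensorProduct.map
            (Θ₂ ∘ₗ (TensorProduct.mk k (H ⊗[k] H) (H ⊗[k] H)).flip E
              ∘ₗ lTensor H (W.mul g₁))
            (W.counit ∘ₗ W.mul.flip (W.mul g₂ (W.mul (f l) v)) ∘ₗ W.mul g₁) with hMjl
    have hMeval : ∀ (u : H ⊗[k] H) (c : H), Mjl (u ⊗ₜ[k] c)
        = W.counit (W.mul (W.mul g₁ c) (W.mul g₂ (W.mul (f l) v)))
            • Θ₂ (lTensor H (W.mul g₁) u ⊗ₜ[k] E) := by
      intro u c
      simp [hMjl, map_tmul, rid_tmul, mk_apply, flip_apply]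
    have hB1 : ∑ i ∈ S,
        W.counit (W.mul (W.mul g₁ (W.mul (f i) x)) (W.mul g₂ (W.mul (f l) v)))
          • Θ₂ (W.βg g₁ (e i) ⊗ₜ[k] E)
        = Mjl (∑ i ∈ S, (W.comul (e i)) ⊗ₜ[k] (W.mul (f i) x)) := by
      rw [map_sum]
      refine Finset.sum_congr rfl fun i _ => ?_
      rw [hMeval]
      rfl
    rw [hB1, U1v W hW hrep x, map_sum]
    refine Finset.sum_congr rfl fun i _ => ?_
    rw [map_sum]
    refine Finset.sum_congr rfl fun m _ => ?_
    rw [hMeval]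
    simp [lTensor_tmul]
  -- Stage C : collapse back using Yid twice and σ
  have hνσ : ∀ (j l : ι) (u : H ⊗[k] H),
      (TensorProduct.rid k H) (TensorProduct.map
          (W.mul.flip (W.mul g₂ (W.mul (f j) (e l))) ∘ₗ W.mul g₁)
          (W.counit ∘ₗ W.mul.flip (W.mul g₂ (W.mul (f l) v)) ∘ₗ W.mul g₁) u)
        = σL u (W.mul (f j) (e l) ⊗ₜ[k] W.mul (f l) v) := by
    intro j l u
    induction u using TensorProduct.induction_on with
    | zero => simp [hσL]
    | tmul A B =>
        rw [hσeval]
        simp [map_tmul, rid_tmul, flip_apply, mul2_tmul, lTensor_tmul, rid_tmul]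
    | add u w hu hw =>
        have hadd : σL (u + w) = σL u + σL w := by
          simp only [hσL, map_add]
          ext z
          simp [LinearMap.add_comp, LinearMap.comp_add]
        simp only [map_add, LinearMap.add_apply, hadd, hu, hw]
  calc W.βtens (W.βg g₁) (W.βg g₂) (W.truncP (W.βg g₁) (W.βg g₂) (x ⊗ₜ[k] v))
      = ∑ j ∈ S, ∑ l ∈ S, ∑ i ∈ S, ∑ m ∈ S,
          W.counit (W.mul (W.mul g₁ (W.mul (f m) x)) (W.mul g₂ (W.mul (f l) v)))
            • Θ₂ ((e i ⊗ₜ[k] W.mul g₁ (W.mul (f i) (e m)))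
                ⊗ₜ[k] (e j ⊗ₜ[k] W.mul g₂ (W.mul (f j) (e l)))) := by
        rw [stageA]
        rw [Finset.sum_comm]
        refine Finset.sum_congr rfl fun j _ => ?_
        rw [Finset.sum_comm]
        refine Finset.sum_congr rfl fun l _ => ?_
        rw [stageB j l]
    _ = ∑ j ∈ S, ∑ l ∈ S, ∑ i ∈ S,
          (e i ⊗ₜ[k] e j) ⊗ₜ[k]
            σL (W.comul (W.mul (f i) x)) (W.mul (f j) (e l) ⊗ₜ[k] W.mul (f l) v) := by
        refine Finset.sum_congr rfl fun j _ => Finset.sum_congr rfl fun l _ => ?_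
        set Njl : H ⊗[k] (H ⊗[k] H) →ₗ[k] (H ⊗[k] H) ⊗[k] H :=
          rTensor H ((TensorProduct.mk k H H).flip (e j))
            ∘ₗ lTensor H ((TensorProduct.rid k H).toLinearMap ∘ₗ TensorProduct.map
                (W.mul.flip (W.mul g₂ (W.mul (f j) (e l))) ∘ₗ W.mul g₁)
                (W.counit ∘ₗ W.mul.flip (W.mul g₂ (W.mul (f l) v)) ∘ₗ W.mul g₁)) with hNjl
    -- continue
        have hNeval : ∀ (a : H) (u : H ⊗[k] H), Njl (a ⊗ₜ[k] u)
            = (a ⊗ₜ[k] e j) ⊗ₜ[k] σL u (W.mul (f j) (e l) ⊗ₜ[k] W.mul (f l) v) := by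
          intro a u
          simp only [hNjl, coe_comp, LinearEquiv.coe_coe, Function.comp_apply, lTensor_tmul,
            rTensor_tmul, flip_apply, mk_apply]
          rw [hνσ]
        have hC1 : ∑ i ∈ S, ∑ m ∈ S,
            W.counit (W.mul (W.mul g₁ (W.mul (f m) x)) (W.mul g₂ (W.mul (f l) v)))
              • Θ₂ ((e i ⊗ₜ[k] W.mul g₁ (W.mul (f i) (e m)))
                  ⊗ₜ[k] (e j ⊗ₜ[k] W.mul g₂ (W.mul (f j) (e l))))
            = Njl (∑ i ∈ S, ∑ m ∈ S, e i ⊗ₜ[k] (W.mul (f i) (e m) ⊗ₜ[k] W.mul (f m) x)) := by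
          rw [map_sum]
          refine Finset.sum_congr rfl fun i _ => ?_
          rw [map_sum]
          refine Finset.sum_congr rfl fun m _ => ?_
          rw [hNeval, hσeval, hΘeval]
          simp only [mul2_tmul, map_tmul, lTensor_tmul, rid_tmul, smul_tmul, tmul_smul]
        rw [hC1, ← Yid W hW hrep hx, map_sum]
        refine Finset.sum_congr rfl fun i _ => ?_
        rw [hNeval]
    _ = ∑ i ∈ S, ∑ j ∈ S, ∑ l ∈ S,
          (e i ⊗ₜ[k] e j) ⊗ₜ[k]
            σL (W.comul (W.mul (f i) x)) (W.mul (f j) (e l) ⊗ₜ[k] W.mul (f l) v) := by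
        exact (Finset.sum_congr rfl fun j _ => Finset.sum_comm).trans Finset.sum_comm
    _ = ∑ i ∈ S, ∑ j ∈ S, (e i ⊗ₜ[k] e j) ⊗ₜ[k]
          W.mul (W.mul g₁ (W.mul (f i) x)) (W.mul g₂ (W.mul (f j) v)) := by
        refine Finset.sum_congr rfl fun i _ => ?_
        set Ri : H ⊗[k] (H ⊗[k] H) →ₗ[k] (H ⊗[k] H) ⊗[k] H :=
          rTensor H (TensorProduct.mk k H H (e i))
            ∘ₗ lTensor H (σL (W.comul (W.mul (f i) x))) with hRi
        have hReval : ∀ (a : H) (u : H ⊗[k] H), Ri (a ⊗ₜ[k] u)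
            = (e i ⊗ₜ[k] a) ⊗ₜ[k] σL (W.comul (W.mul (f i) x)) u := by
          intro a u
          simp [hRi, lTensor_tmul, rTensor_tmul, mk_apply]
        have hC2 : ∑ j ∈ S, ∑ l ∈ S, (e i ⊗ₜ[k] e j) ⊗ₜ[k]
              σL (W.comul (W.mul (f i) x)) (W.mul (f j) (e l) ⊗ₜ[k] W.mul (f l) v)
            = Ri (∑ j ∈ S, ∑ l ∈ S, e j ⊗ₜ[k] (W.mul (f j) (e l) ⊗ₜ[k] W.mul (f l) v)) := by
          rw [map_sum]
          refine Finset.sum_congr rfl fun j _ => ?_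
          rw [map_sum]
          refine Finset.sum_congr rfl fun l _ => ?_
          rw [hReval]
        rw [hC2, ← Yid W hW hrep hv, map_sum]
        refine Finset.sum_congr rfl fun j _ => ?_
        rw [hReval, hσcomul]
    _ = W.βtens (W.βg g₁) (W.βg g₂) (x ⊗ₜ[k] v) := by
        rw [βtens_rep W g₁ g₂ hFx hFv]

end Rep
end WBData
end Aux9
noncomputable section Aux10
open TensorProduct LinearMap

variable {k : Type} [CommRing k] {H : Type} [AddCommGroup H] [Module k H]

namespace WBData
variable (W : WBData k H) {ι : Type} {S : Finset ι} {e f : ι → H}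

theorem helper_assoc_symm {M N : Type} [AddCommGroup M] [Module k M]
    [AddCommGroup N] [Module k N]
    (F : H ⊗[k] H →ₗ[k] M) (q : H →ₗ[k] N) (a : H) (B : H ⊗[k] H) :
    TensorProduct.map F q ((TensorProduct.assoc k H H H).symm (a ⊗ₜ[k] B))
      = TensorProduct.map (F ∘ₗ TensorProduct.mk k H H a) q B := by
  induction B using TensorProduct.induction_on with
  | zero => simp
  | tmul b c => simp [assoc_symm_tmul, map_tmul, mk_apply]
  | add u v hu hv => simp only [tmul_add, map_add] at *; rw [hu, hv]

theorem helper_collapse2 {M N : Type} [AddCommGroup M] [Module k M]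
    [AddCommGroup N] [Module k N]
    (φ : H →ₗ[k] M) (q : H →ₗ[k] N) (A B : H →ₗ[k] H) (u : H ⊗[k] H) :
    TensorProduct.map (φ ∘ₗ A) (q ∘ₗ B) u
      = TensorProduct.map φ q (TensorProduct.map A B u) := by
  induction u using TensorProduct.induction_on with
  | zero => simp
  | tmul a b => simp [map_tmul]
  | add u v hu hv => simp only [map_add] at *; rw [hu, hv]

theorem helper_span (φ : H →ₗ[k] k) (q : H →ₗ[k] H) (a : H) (u : H ⊗[k] H) :
    TensorProduct.map (LinearMap.toSpanSingleton k H a ∘ₗ φ) q u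
      = a ⊗ₜ[k] (TensorProduct.lid k H) (TensorProduct.map φ q u) := by
  induction u using TensorProduct.induction_on with
  | zero => simp
  | tmul b c =>
      simp [map_tmul, toSpanSingleton_apply, lid_tmul, smul_tmul, tmul_smul]
  | add u v hu hv => simp only [map_add, tmul_add] at *; rw [hu, hv]

theorem helper_final (hW : W.IsWeakBialgebra) (g : H) (φ : H →ₗ[k] k) (B : H →ₗ[k] H)
    (u : H ⊗[k] H) :
    (TensorProduct.lid k H) (TensorProduct.map φ (W.mul g ∘ₗ B) u)
      = W.mul g ((TensorProduct.lid k H) (TensorProduct.map φ B u)) := by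
  induction u using TensorProduct.induction_on with
  | zero => simp
  | tmul a b => simp [map_tmul, lid_tmul]
  | add u v hu hv => simp only [map_add] at *; rw [hu, hv]

section Rep

theorem Xid (hW : W.IsWeakBialgebra) (hrep : W.comul W.one = ∑ i ∈ S, e i ⊗ₜ[k] f i)
    {v : H} (hv : v ∈ W.Hs) :
    ∑ j ∈ S, (W.comul (e j)) ⊗ₜ[k] (W.mul (f j) v)
      = ∑ j ∈ S, (TensorProduct.assoc k H H H).symm (e j ⊗ₜ[k] W.comul (W.mul (f j) v)) := by
  have hFv := F1 W hW hrep hv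
  have h1 : rTensor H W.comul (W.comul v) = ∑ j ∈ S, (W.comul (e j)) ⊗ₜ[k] (W.mul (f j) v) := by
    rw [hFv]; simp [map_sum, rTensor_tmul]
  have h2 : lTensor H W.comul (W.comul v)
      = ∑ j ∈ S, e j ⊗ₜ[k] W.comul (W.mul (f j) v) := by
    rw [hFv]; simp [map_sum, lTensor_tmul]
  have h3 := hW.coassoc v
  rw [h1, h2] at h3
  calc ∑ j ∈ S, (W.comul (e j)) ⊗ₜ[k] (W.mul (f j) v)
      = (TensorProduct.assoc k H H H).symm
          ((TensorProduct.assoc k H H H) (∑ j ∈ S, (W.comul (e j)) ⊗ₜ[k] (W.mul (f j) v))) := by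
        rw [LinearEquiv.symm_apply_apply]
    _ = ∑ j ∈ S, (TensorProduct.assoc k H H H).symm (e j ⊗ₜ[k] W.comul (W.mul (f j) v)) := by
        rw [h3, map_sum]

theorem S5 (hW : W.IsWeakBialgebra) (hrep : W.comul W.one = ∑ i ∈ S, e i ⊗ₜ[k] f i)
    {g₁ g₂ : H}
    (hg₁r : W.comul g₁ = W.mul₂ (g₁ ⊗ₜ[k] g₁) (W.comul W.one))
    (hg₁s : W.εsMap g₁ = W.one)
    (hg₂r : W.comul g₂ = W.mul₂ (g₂ ⊗ₜ[k] g₂) (W.comul W.one))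
    {x v : H} (hx : x ∈ W.Hs) (hv : v ∈ W.Hs) :
    W.βg (W.mul g₁ g₂) (W.ΛW g₂ (W.truncP (W.βg g₁) (W.βg g₂) (x ⊗ₜ[k] v)))
      = rTensor H (W.ΛW g₂) (W.βtens (W.βg g₁) (W.βg g₂) (W.truncP (W.βg g₁) (W.βg g₂) (x ⊗ₜ[k] v))) := by
  have hFx := F1 W hW hrep hx
  have hFv := F1 W hW hrep hv
  -- LHS
  rw [L1 W hW hrep hg₁s hg₂r hx hv]
  set y : H := ∑ j ∈ S, W.counit (W.mul x (W.mul g₂ (W.mul (f j) v))) • e j with hy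
  have hymem : y ∈ W.Hs := by
    have h : y = ∑ j ∈ S, W.counit (W.mul (W.mul x g₂) (W.mul (f j) v)) • e j := by
      rw [hy]; simp_rw [hW.mul_assoc]
    rw [h]; exact K14 W hW hrep (W.mul x g₂) v
  have hFy := F1 W hW hrep hymem
  -- τ and its comul evaluation
  set τ : H ⊗[k] H →ₗ[k] H :=
    (TensorProduct.rid k H).toLinearMap
      ∘ₗ TensorProduct.map (W.mul g₂) (W.counit ∘ₗ W.mul x ∘ₗ W.mul g₂) with hτ
  have hτδ : ∀ b : H, τ (W.comul b) = W.mul x (W.mul g₂ b) := by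
    intro b
    have hc : TensorProduct.map (W.mul g₂) ((W.counit ∘ₗ W.mul x) ∘ₗ W.mul g₂) (W.comul b)
        = TensorProduct.map LinearMap.id (W.counit ∘ₗ W.mul x)
            (TensorProduct.map (W.mul g₂) (W.mul g₂) (W.comul b)) := by
      have h := helper_collapse2 (LinearMap.id (R := k) (M := H)) (W.counit ∘ₗ W.mul x)
        (W.mul g₂) (W.mul g₂) (W.comul b)
      rwa [id_comp] at h
    have hG := G4 W hW hg₂r hrep b
    simp only [hτ, coe_comp, LinearEquiv.coe_coe, Function.comp_apply]
    rw [show (W.counit ∘ₗ W.mul x ∘ₗ W.mul g₂) = ((W.counit ∘ₗ W.mul x) ∘ₗ W.mul g₂) from rfl,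
      hc, ← hG]
    have : ∀ u : H ⊗[k] H, (TensorProduct.rid k H)
        (TensorProduct.map LinearMap.id (W.counit ∘ₗ W.mul x) u)
        = (TensorProduct.rid k H) (lTensor H (W.counit ∘ₗ W.mul x) u) := by
      intro u; rfl
    rw [this, C6 W hW hrep hx (W.mul g₂ b)]
  -- Ψ gadget for δ y
  set Ψ : (H ⊗[k] H) ⊗[k] H →ₗ[k] H ⊗[k] H :=
    (TensorProduct.rid k (H ⊗[k] H)).toLinearMap
      ∘ₗ TensorProduct.map LinearMap.id (W.counit ∘ₗ W.mul x ∘ₗ W.mul g₂) with hΨ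
  have hδy : W.comul y = Ψ (∑ l ∈ S, (W.comul (e l)) ⊗ₜ[k] (W.mul (f l) v)) := by
    rw [hy, map_sum, map_sum]
    refine Finset.sum_congr rfl fun l _ => ?_
    simp [hΨ, map_tmul, rid_tmul, map_smul]
  have hΨB : ∀ (a : H) (B : H ⊗[k] H),
      lTensor H (W.mul g₂) (Ψ ((TensorProduct.assoc k H H H).symm (a ⊗ₜ[k] B)))
        = a ⊗ₜ[k] τ B := by
    intro a B
    induction B using TensorProduct.induction_on with
    | zero => simp [hτ]
    | tmul b c =>
        simp [hΨ, hτ, assoc_symm_tmul, map_tmul, rid_tmul, lTensor_tmul, tmul_smul,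
          smul_tmul]
    | add u w hu hw => simp only [tmul_add, map_add] at *; rw [hu, hw]
  have heart : lTensor H (W.mul g₂) (W.comul y)
      = ∑ j ∈ S, e j ⊗ₜ[k] (W.mul x (W.mul g₂ (W.mul (f j) v))) := by
    rw [hδy, Xid W hW hrep hv, map_sum, map_sum]
    refine Finset.sum_congr rfl fun j _ => ?_
    rw [hΨB, hτδ]
  have hLHS : W.βg (W.mul g₁ g₂) y
      = ∑ j ∈ S, e j ⊗ₜ[k] W.mul g₁ (W.mul x (W.mul g₂ (W.mul (f j) v))) := by
    have h0 : W.βg (W.mul g₁ g₂) y = lTensor H (W.mul (W.mul g₁ g₂)) (W.comul y) := rfl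
    have h1 : W.mul (W.mul g₁ g₂) = W.mul g₁ ∘ₗ W.mul g₂ := mul_mul_comp W hW g₁ g₂
    rw [h0, h1, lTensor_comp, comp_apply, heart, map_sum]
    simp [lTensor_tmul]
  rw [hLHS]
  -- RHS
  rw [L3 W hW hrep hg₁r hg₂r hx hv, βtens_rep W g₁ g₂ hFx hFv]
  simp only [map_sum]
  refine Eq.symm ?_
  have hstep : ∀ i : ι, ∑ j ∈ S,
      rTensor H (W.ΛW g₂) ((e i ⊗ₜ[k] e j) ⊗ₜ[k]
        W.mul (W.mul g₁ (W.mul (f i) x)) (W.mul g₂ (W.mul (f j) v)))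
      = ∑ j ∈ S, TensorProduct.map
          (LinearMap.toSpanSingleton k H (e j) ∘ₗ (W.counit ∘ₗ W.mul (e i) ∘ₗ W.mul g₂))
          (W.mul (W.mul g₁ (W.mul (f i) x)) ∘ₗ W.mul g₂)
          (W.comul (W.mul (f j) v)) := by
    intro i
    set ρ : H ⊗[k] H →ₗ[k] H :=
      (TensorProduct.rid k H).toLinearMap
        ∘ₗ lTensor H (W.counit ∘ₗ W.mul (e i) ∘ₗ W.mul g₂) with hρ
    set Gi : (H ⊗[k] H) ⊗[k] H →ₗ[k] H ⊗[k] H :=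
      TensorProduct.map ρ (W.mul (W.mul g₁ (W.mul (f i) x)) ∘ₗ W.mul g₂) with hGi
    have h1 : ∑ j ∈ S, rTensor H (W.ΛW g₂) ((e i ⊗ₜ[k] e j) ⊗ₜ[k]
          W.mul (W.mul g₁ (W.mul (f i) x)) (W.mul g₂ (W.mul (f j) v)))
        = Gi (∑ j ∈ S, (W.comul (e j)) ⊗ₜ[k] (W.mul (f j) v)) := by
      rw [map_sum]
      refine Finset.sum_congr rfl fun j _ => ?_
      rw [rTensor_tmul, hGi, map_tmul, ΛW_eval, hρ]
      rfl
    rw [h1, Xid W hW hrep hv, map_sum]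
    refine Finset.sum_congr rfl fun j _ => ?_
    rw [hGi, helper_assoc_symm]
    have hcomp : ρ ∘ₗ TensorProduct.mk k H H (e j)
        = LinearMap.toSpanSingleton k H (e j) ∘ₗ (W.counit ∘ₗ W.mul (e i) ∘ₗ W.mul g₂) := by
      ext w
      simp [hρ, mk_apply, lTensor_tmul, rid_tmul, toSpanSingleton_apply]
    rw [hcomp]
  calc ∑ i ∈ S, ∑ j ∈ S,
        rTensor H (W.ΛW g₂) ((e i ⊗ₜ[k] e j) ⊗ₜ[k]
          W.mul (W.mul g₁ (W.mul (f i) x)) (W.mul g₂ (W.mul (f j) v)))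
      = ∑ j ∈ S, ∑ i ∈ S, TensorProduct.map
          (LinearMap.toSpanSingleton k H (e j) ∘ₗ (W.counit ∘ₗ W.mul (e i) ∘ₗ W.mul g₂))
          (W.mul (W.mul g₁ (W.mul (f i) x)) ∘ₗ W.mul g₂)
          (W.comul (W.mul (f j) v)) := by
        exact (Finset.sum_congr rfl fun i _ => hstep i).trans Finset.sum_comm
    _ = ∑ j ∈ S, e j ⊗ₜ[k] W.mul g₁ (W.mul x (W.mul g₂ (W.mul (f j) v))) := by
        refine Finset.sum_congr rfl fun j _ => ?_
        have hterm : ∀ i : ι, TensorProduct.map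
            (LinearMap.toSpanSingleton k H (e j) ∘ₗ (W.counit ∘ₗ W.mul (e i) ∘ₗ W.mul g₂))
            (W.mul (W.mul g₁ (W.mul (f i) x)) ∘ₗ W.mul g₂)
            (W.comul (W.mul (f j) v))
            = e j ⊗ₜ[k] (TensorProduct.lid k H) (TensorProduct.map
                (W.counit ∘ₗ W.mul (e i))
                (W.mul g₁ ∘ₗ W.mul (W.mul (f i) x))
                (W.comul (W.mul g₂ (W.mul (f j) v)))) := by
          intro i
          rw [helper_span]
          congr 1
          rw [G4 W hW hg₂r hrep (W.mul (f j) v), ← helper_collapse2]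
          congr 1
          rw [mul_mul_comp W hW g₁ (W.mul (f i) x)]
          rfl
        simp_rw [hterm]
        rw [← tmul_sum]
        congr 1
        have hfin : ∀ i : ι, (TensorProduct.lid k H) (TensorProduct.map
              (W.counit ∘ₗ W.mul (e i)) (W.mul g₁ ∘ₗ W.mul (W.mul (f i) x))
              (W.comul (W.mul g₂ (W.mul (f j) v))))
            = W.mul g₁ ((TensorProduct.lid k H) (TensorProduct.map
                (W.counit ∘ₗ W.mul (e i)) (W.mul (W.mul (f i) x))
                (W.comul (W.mul g₂ (W.mul (f j) v))))) := fun i =>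
          helper_final W hW g₁ _ _ _
        simp_rw [hfin]
        rw [← map_sum, K8R W hW hrep hx (W.mul g₂ (W.mul (f j) v))]

end Rep
end WBData
end Aux10
/-- For group-likes `g₁, g₂` in a weak bialgebra `H`, the truncated tensor
product `H_s^{g₁} ⊗̂ H_s^{g₂}` is isomorphic as a right `H`-comodule to `H_s^{g₁g₂}`, the
isomorphism being induced by the left-unit constraint `λ(x⊗v) = v₀ ε(x v₁)` of the comodule
category. -/
theorem grouplike_comodule_mul {k : Type} [Field k] {H : Type} [AddCommGroup H] [Module k H]
    (W : WBData k H) (hW : W.IsWeakBialgebra) (g₁ g₂ : H)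
    (h₁ : W.IsGroupLike g₁) (h₂ : W.IsGroupLike g₂) :
    -- the subspace H_s ⊗ H_s of H ⊗ H
    let D : Submodule k (H ⊗[k] H) :=
      LinearMap.range (TensorProduct.map (W.Hs).subtype (W.Hs).subtype)
    -- the truncated tensor product H_s^{g₁} ⊗̂ H_s^{g₂}, as the image of the truncation
    -- idempotent P on H_s ⊗ H_s
    let T : Submodule k (H ⊗[k] H) := Submodule.map (W.truncP (W.βg g₁) (W.βg g₂)) D
    -- the left-unit constraint  x ⊗ v ↦ v₀ ε(x v₁)  for the coaction of H_s^{g₂}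
    let Λ : H ⊗[k] H →ₗ[k] H :=
      (TensorProduct.rid k H).toLinearMap
        ∘ₗ LinearMap.lTensor H (W.counit ∘ₗ W.mulT)
        ∘ₗ (TensorProduct.assoc k H H H).toLinearMap
        ∘ₗ LinearMap.rTensor H (TensorProduct.comm k H H).toLinearMap
        ∘ₗ (TensorProduct.assoc k H H H).symm.toLinearMap
        ∘ₗ LinearMap.lTensor H (W.βg g₂)
    -- Λ maps the truncated tensor product bijectively onto H_s and intertwines the coaction
    -- of the truncated tensor product with that of H_s^{g₁g₂}
    (∀ t ∈ T, Λ t ∈ W.Hs) ∧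
    Set.BijOn (⇑Λ) (T : Set (H ⊗[k] H)) ((W.Hs : Set H)) ∧
    (∀ t ∈ T, W.βg (W.mul g₁ g₂) (Λ t) =
      LinearMap.rTensor H Λ (W.βtens (W.βg g₁) (W.βg g₂) t)) := by
  obtain ⟨⟨hg₁r, hg₁s⟩, -⟩ := h₁
  obtain ⟨⟨hg₂r, hg₂s⟩, -⟩ := h₂
  obtain ⟨S, hrep⟩ := TensorProduct.exists_finset (W.comul W.one)
  intro D T Λ
  have hΛ : Λ = W.ΛW g₂ := rfl
  have h1mem : W.one ∈ W.Hs := W.one_mem_Hs hW hrep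
  set P : H ⊗[k] H →ₗ[k] H ⊗[k] H := W.truncP (W.βg g₁) (W.βg g₂) with hP
  -- main generator lemmas
  have main1 : ∀ c : (↥W.Hs ⊗[k] ↥W.Hs),
      Λ (P (TensorProduct.map (W.Hs).subtype (W.Hs).subtype c)) ∈ W.Hs := by
    intro c
    induction c using TensorProduct.induction_on with
    | zero => simp only [map_zero]; exact zero_mem _
    | tmul a b =>
        rw [TensorProduct.map_tmul]
        simp only [Submodule.subtype_apply]
        rw [hΛ, hP, W.L1 hW hrep hg₁s hg₂r a.2 b.2]
        have h : (∑ j ∈ S, W.counit (W.mul ↑a (W.mul g₂ (W.mul j.2 ↑b))) • j.1)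
            = ∑ j ∈ S, W.counit (W.mul (W.mul ↑a g₂) (W.mul j.2 ↑b)) • j.1 := by
          simp_rw [hW.mul_assoc]
        rw [h]
        exact W.K14 hW hrep (W.mul ↑a g₂) ↑b
    | add u v hu hv =>
        rw [map_add, map_add, map_add]
        exact add_mem hu hv
  have mainΩ : ∀ c : (↥W.Hs ⊗[k] ↥W.Hs),
      P (W.one ⊗ₜ[k] Λ (P (TensorProduct.map (W.Hs).subtype (W.Hs).subtype c)))
        = P (TensorProduct.map (W.Hs).subtype (W.Hs).subtype c) := by
    intro c
    induction c using TensorProduct.induction_on with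
    | zero => simp only [map_zero, TensorProduct.tmul_zero]
    | tmul a b =>
        rw [TensorProduct.map_tmul]
        simp only [Submodule.subtype_apply]
        rw [hΛ, hP, W.L1 hW hrep hg₁s hg₂r a.2 b.2]
        exact W.S3 hW hrep g₁ hg₂r a.2 b.2
    | add u v hu hv =>
        simp only [map_add, TensorProduct.tmul_add, hu, hv]
  have main3 : ∀ c : (↥W.Hs ⊗[k] ↥W.Hs),
      W.βg (W.mul g₁ g₂) (Λ (P (TensorProduct.map (W.Hs).subtype (W.Hs).subtype c)))
        = LinearMap.rTensor H Λ (W.βtens (W.βg g₁) (W.βg g₂)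
            (P (TensorProduct.map (W.Hs).subtype (W.Hs).subtype c))) := by
    intro c
    induction c using TensorProduct.induction_on with
    | zero => simp only [map_zero]
    | tmul a b =>
        rw [TensorProduct.map_tmul]
        simp only [Submodule.subtype_apply]
        rw [hΛ, hP]
        exact W.S5 hW hrep hg₁r hg₁s hg₂r a.2 b.2
    | add u v hu hv =>
        simp only [map_add, hu, hv]
  have hmem : ∀ t ∈ T, ∃ c : (↥W.Hs ⊗[k] ↥W.Hs),
      t = P (TensorProduct.map (W.Hs).subtype (W.Hs).subtype c) := by
    intro t ht
    obtain ⟨d, hd, rfl⟩ := ht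
    obtain ⟨c, rfl⟩ := hd
    exact ⟨c, rfl⟩
  have mapsTo : ∀ t ∈ T, Λ t ∈ W.Hs := by
    intro t ht
    obtain ⟨c, rfl⟩ := hmem t ht
    exact main1 c
  refine ⟨mapsTo, ⟨mapsTo, ?_, ?_⟩, ?_⟩
  · -- injectivity
    intro t₁ ht₁ t₂ ht₂ heq
    obtain ⟨c₁, rfl⟩ := hmem t₁ ht₁
    obtain ⟨c₂, rfl⟩ := hmem t₂ ht₂
    calc P (TensorProduct.map (W.Hs).subtype (W.Hs).subtype c₁)
        = P (W.one ⊗ₜ[k] Λ (P (TensorProduct.map (W.Hs).subtype (W.Hs).subtype c₁))) :=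
          (mainΩ c₁).symm
      _ = P (W.one ⊗ₜ[k] Λ (P (TensorProduct.map (W.Hs).subtype (W.Hs).subtype c₂))) := by
          rw [heq]
      _ = P (TensorProduct.map (W.Hs).subtype (W.Hs).subtype c₂) := mainΩ c₂
  · -- surjectivity
    intro y hy
    have hD : W.one ⊗ₜ[k] y ∈ D := by
      refine ⟨(⟨W.one, h1mem⟩ : ↥W.Hs) ⊗ₜ[k] (⟨y, hy⟩ : ↥W.Hs), ?_⟩
      rw [TensorProduct.map_tmul]
      rfl
    refine ⟨P (W.one ⊗ₜ[k] y), ⟨W.one ⊗ₜ[k] y, hD, rfl⟩, ?_⟩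
    rw [hΛ, hP, W.L1 hW hrep hg₁s hg₂r h1mem hy]
    have h : (∑ j ∈ S, W.counit (W.mul W.one (W.mul g₂ (W.mul j.2 y))) • j.1)
        = ∑ j ∈ S, W.counit (W.mul g₂ (W.mul j.2 y)) • j.1 := by
      simp_rw [hW.one_mul]
    rw [h]
    exact W.C2 hW hrep hg₂s hy
  · -- intertwining
    intro t ht
    obtain ⟨c, rfl⟩ := hmem t ht
    exact main3 c
end

section
/- Let H be a weak bialgebra. There is a one-to-one correspondence between right group-like elements g ∈ H and right H-coactions β: H_s → H_s ⊗ H on the source base algebra satisfying (id⊗ε_s)∘β = (id⊗ε_s)∘Δ∘ε_s. The correspondence sends a coaction β with β(1)=1_0⊗1_1 to g = ε(1_0)1_1, and conversely a right group-like g to the coaction β(x) = ε_s(x') ⊗ (g x''). -/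
/-!
Write `Δ1 = 1' ⊗ 1''`. The source base algebra `H_s` consists exactly of the `x` with
`Δx = 1' ⊗ x1''`, and `ε_s(1') ⊗ 1'' = Δ1`; hence for a right group-like `g` the coaction
`β(x) = ε_s(x') ⊗ gx''` is `x ↦ 1' ⊗ gx1''` on `H_s`, and its coassociativity reduces to that
of `Δ1`. Conversely, for a compatible coaction `β` let `γ(x) = ε(x₀)x₁`. Coassociativity of `β`
gives `(γ ⊗ id)β = Δγ` and compatibility gives `ε_s ∘ γ = id`; together with
`h = h' ε_s(h'')` and `ε_s(h') ⊗ h'' = 1' ⊗ h1''` this forces `γ(x) = g x` for `g = γ(1)`,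
`Δg = g1' ⊗ g1''` and `β(x) = ε_s((gx)') ⊗ (gx)''`. Since `ε_s` is an idempotent onto `H_s`,
`H_s ⊗ M → H ⊗ M` is injective, so all identities may be checked in `H ⊗ H`.
-/

open TensorProduct

section Statement12

variable {k : Type} [Field k] {H : Type} [AddCommGroup H] [Module k H] (W : WBData k H)

/-- A right `H`-coaction on the source base algebra `H_s = range ε_s` satisfying the
compatibility condition `(id ⊗ ε_s) ∘ β = (id ⊗ ε_s) ∘ Δ ∘ ε_s`. -/
def IsCompatibleCoactionOnHs (β : ↥(W.Hs) →ₗ[k] ↥(W.Hs) ⊗[k] H) : Prop :=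
  -- coassociativity
  (∀ x : ↥(W.Hs), (TensorProduct.assoc k (↥(W.Hs)) H H)
      (LinearMap.rTensor H β (β x)) = LinearMap.lTensor (↥(W.Hs)) W.comul (β x)) ∧
  -- counitality
  (∀ x : ↥(W.Hs), (TensorProduct.rid k (↥(W.Hs)))
      (LinearMap.lTensor (↥(W.Hs)) W.counit (β x)) = (x : ↥(W.Hs))) ∧
  -- (id ⊗ ε_s) ∘ β = (id ⊗ ε_s) ∘ Δ ∘ ε_s
  (∀ x : ↥(W.Hs), LinearMap.rTensor H (W.Hs).subtype
      (LinearMap.lTensor (↥(W.Hs)) W.εsMap (β x)) =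
    LinearMap.lTensor H W.εsMap (W.comul (W.εsMap (x : H))))

/-- The coaction on `H_s` associated to a right group-like `g`:
`β(x) = ε_s(x') ⊗ (g x'')`. -/
noncomputable def coactionOfGrouplike (g : H) : ↥(W.Hs) →ₗ[k] ↥(W.Hs) ⊗[k] H :=
  TensorProduct.map (W.εsMap.rangeRestrict) (W.mul g) ∘ₗ W.comul ∘ₗ (W.Hs).subtype

/-- The unit `1 = ε_s(1)` of `H` as an element of `H_s`. -/
noncomputable def oneHs : ↥(W.Hs) := ⟨W.εsMap W.one, ⟨W.one, rfl⟩⟩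

/-- The group-like element `g = ε(1₀) 1₁` associated to a coaction `β` on `H_s`. -/
noncomputable def grouplikeOfCoaction (β : ↥(W.Hs) →ₗ[k] ↥(W.Hs) ⊗[k] H) : H :=
  (TensorProduct.lid k H)
    (LinearMap.rTensor H (W.counit ∘ₗ (W.Hs).subtype) (β (oneHs W)))

namespace TensorProduct

variable {R : Type} [CommSemiring R] {M N P : Type} [AddCommMonoid M] [Module R M]
  [AddCommMonoid N] [Module R N] [AddCommMonoid P] [Module R P]

lemma lid_rTensor_lTensor (φ : M →ₗ[R] R) (f : N →ₗ[R] P) (t : M ⊗[R] N) :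
    TensorProduct.lid R P (LinearMap.rTensor P φ (LinearMap.lTensor M f t)) =
      f (TensorProduct.lid R N (LinearMap.rTensor N φ t)) := by
  induction t using TensorProduct.induction_on with
  | zero => simp
  | tmul m n => simp
  | add s t hs ht => simp only [map_add, hs, ht]

lemma rid_lTensor_rTensor (φ : N →ₗ[R] R) (f : M →ₗ[R] P) (t : M ⊗[R] N) :
    TensorProduct.rid R P (LinearMap.lTensor P φ (LinearMap.rTensor N f t)) =
      f (TensorProduct.rid R M (LinearMap.lTensor M φ t)) := by
  induction t using TensorProduct.induction_on with
  | zero => simp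
  | tmul m n => simp
  | add s t hs ht => simp only [map_add, hs, ht]

end TensorProduct

namespace WBData

open LinearMap

variable {R : Type} [CommRing R] {A : Type} [AddCommGroup A] [Module R A] (V : WBData R A)

@[simp]
lemma mulT_tmul_s12 (a b : A) : V.mulT (a ⊗ₜ[R] b) = V.mul a b := rfl

def mul₂ₗ : A ⊗[R] A →ₗ[R] A ⊗[R] A →ₗ[R] A ⊗[R] A :=
  (TensorProduct.mk R _ _).compr₂
    (map V.mulT V.mulT ∘ₗ (tensorTensorTensorComm R A A A A).toLinearMap)

lemma mul₂ₗ_apply (s t : A ⊗[R] A) : V.mul₂ₗ s t = V.mul₂ s t := rfl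

lemma mul₂_tmul_left (a b : A) (t : A ⊗[R] A) :
    V.mul₂ (a ⊗ₜ[R] b) t = map (V.mul a) (V.mul b) t := by
  rw [← mul₂ₗ_apply]
  induction t using TensorProduct.induction_on with
  | zero => simp
  | tmul c d => simp [mul₂ₗ]
  | add s t hs ht => rw [map_add, hs, ht, map_add]

variable {S : Finset (A × A)}

lemma εsMap_eq_sum (h1 : V.comul V.one = ∑ i ∈ S, i.1 ⊗ₜ[R] i.2) (h : A) :
    V.εsMap h = ∑ i ∈ S, V.counit (V.mul h i.2) • i.1 := by
  simp [εsMap, h1]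

lemma εsMap_eq_rid_lTensor (h : A) :
    V.εsMap h = TensorProduct.rid R A (lTensor A (V.counit ∘ₗ V.mul h) (V.comul V.one)) := by
  obtain ⟨S, h1⟩ := TensorProduct.exists_finset (V.comul V.one)
  simp [V.εsMap_eq_sum h1, h1]

namespace IsWeakBialgebra

variable {V} (hV : V.IsWeakBialgebra)
include hV

lemma mul_mul_eq_comp (a b : A) : V.mul (V.mul a b) = V.mul a ∘ₗ V.mul b := by
  ext c
  simp [hV.mul_assoc]

lemma mul₂_assoc (s t u : A ⊗[R] A) : V.mul₂ (V.mul₂ s t) u = V.mul₂ s (V.mul₂ t u) := by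
  induction s using TensorProduct.induction_on with
  | zero => simp [← mul₂ₗ_apply]
  | add s s' hs hs' => simp only [← mul₂ₗ_apply, map_add, LinearMap.add_apply] at *; rw [hs, hs']
  | tmul a b =>
    induction t using TensorProduct.induction_on with
    | zero => simp [← mul₂ₗ_apply]
    | add t t' ht ht' =>
      simp only [← mul₂ₗ_apply, map_add, LinearMap.add_apply] at *; rw [ht, ht']
    | tmul c d =>
      simp only [mul₂_tmul_left, map_tmul, map_map, hV.mul_mul_eq_comp]

lemma mul₂_comul_one_comul (y : A) : V.mul₂ (V.comul V.one) (V.comul y) = V.comul y := by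
  rw [← hV.comul_mul, hV.one_mul]

lemma mul₂_comul_comul_one (y : A) : V.mul₂ (V.comul y) (V.comul V.one) = V.comul y := by
  rw [← hV.comul_mul, hV.mul_one]

lemma counit_mul_eq_sum (h1 : V.comul V.one = ∑ i ∈ S, i.1 ⊗ₜ[R] i.2) (x z : A) :
    V.counit (V.mul x z) = ∑ i ∈ S, V.counit (V.mul x i.2) * V.counit (V.mul i.1 z) := by
  simpa [h1, hV.mul_one] using hV.counit_mul_op x V.one z

lemma rTensor_comul_comul_one_eq_sum (h1 : V.comul V.one = ∑ i ∈ S, i.1 ⊗ₜ[R] i.2) :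
    rTensor A V.comul (V.comul V.one) = ∑ i ∈ S, ∑ j ∈ S, (i.1 ⊗ₜ[R] V.mul j.1 i.2) ⊗ₜ[R] j.2 := by
  have h := hV.comul_one_op
  simp only [h1, map_sum, rTensor_tmul, comm_tmul, sum_tmul, tmul_sum,
    tensorTensorTensorComm_tmul, map_tmul, LinearMap.id_coe, id_eq, assoc_symm_tmul,
    LinearMap.comp_apply, LinearEquiv.coe_coe, mulT_tmul_s12] at h
  rw [h1, map_sum]
  simp only [rTensor_tmul]
  rw [h, Finset.sum_comm]

lemma rTensor_comul_comul_one_eq_sum' (h1 : V.comul V.one = ∑ i ∈ S, i.1 ⊗ₜ[R] i.2) :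
    rTensor A V.comul (V.comul V.one) = ∑ i ∈ S, ∑ j ∈ S, (i.1 ⊗ₜ[R] V.mul i.2 j.1) ⊗ₜ[R] j.2 := by
  have h := hV.comul_one
  simp only [h1, map_sum, rTensor_tmul, comm_tmul, sum_tmul, tmul_sum,
    tensorTensorTensorComm_tmul, map_tmul, LinearMap.id_coe, id_eq, assoc_symm_tmul,
    LinearEquiv.coe_coe, mulT_tmul_s12] at h
  rw [h1, map_sum]
  simp only [rTensor_tmul]
  rw [h, Finset.sum_comm]

lemma counit_εsMap_mul (a c : A) : V.counit (V.mul (V.εsMap a) c) = V.counit (V.mul a c) := by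
  obtain ⟨S, h1⟩ := TensorProduct.exists_finset (V.comul V.one)
  simp [V.εsMap_eq_sum h1, hV.counit_mul_eq_sum h1 a c]

lemma εsMap_εsMap_mul (a b : A) : V.εsMap (V.mul (V.εsMap a) b) = V.εsMap (V.mul a b) := by
  obtain ⟨S, h1⟩ := TensorProduct.exists_finset (V.comul V.one)
  rw [V.εsMap_eq_sum h1 (V.mul (V.εsMap a) b), V.εsMap_eq_sum h1 (V.mul a b)]
  simp only [hV.mul_assoc, hV.counit_εsMap_mul]

lemma εsMap_one : V.εsMap V.one = V.one := by
  obtain ⟨S, h1⟩ := TensorProduct.exists_finset (V.comul V.one)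
  simpa [V.εsMap_eq_sum h1, hV.one_mul, h1] using hV.counit_right V.one

lemma εsMap_εsMap (a : A) : V.εsMap (V.εsMap a) = V.εsMap a := by
  simpa [hV.mul_one] using hV.εsMap_εsMap_mul a V.one

lemma εsMap_of_mem_Hs {x : A} (hx : x ∈ V.Hs) : V.εsMap x = x := by
  obtain ⟨a, rfl⟩ := hx
  exact hV.εsMap_εsMap a

lemma rTensor_εsMap_comul_one : rTensor A V.εsMap (V.comul V.one) = V.comul V.one := by
  obtain ⟨S, h1⟩ := TensorProduct.exists_finset (V.comul V.one)
  have h := congrArg (rTensor A ((TensorProduct.rid R A).toLinearMap ∘ₗ lTensor A V.counit))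
    (hV.rTensor_comul_comul_one_eq_sum h1)
  have hcomul : (TensorProduct.rid R A).toLinearMap ∘ₗ lTensor A V.counit ∘ₗ V.comul = .id :=
    LinearMap.ext hV.counit_right
  rw [← LinearMap.comp_apply, ← rTensor_comp, LinearMap.comp_assoc, hcomul, rTensor_id,
    LinearMap.id_apply] at h
  simp only [map_sum, rTensor_tmul, LinearMap.comp_apply, lTensor_tmul, LinearEquiv.coe_coe,
    TensorProduct.rid_tmul] at h
  conv_rhs => rw [h, Finset.sum_comm]
  simp [h1, V.εsMap_eq_sum h1, sum_tmul]

lemma comul_of_mem_Hs {x : A} (hx : x ∈ V.Hs) :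
    V.comul x = lTensor A (V.mul x) (V.comul V.one) := by
  obtain ⟨a, rfl⟩ := hx
  obtain ⟨S, h1⟩ := TensorProduct.exists_finset (V.comul V.one)
  have h := congrArg ((TensorProduct.rid R (A ⊗[R] A)).toLinearMap ∘ₗ
    lTensor (A ⊗[R] A) (V.counit ∘ₗ V.mul a)) (hV.rTensor_comul_comul_one_eq_sum h1)
  rw [h1] at h
  simp at h
  simp [V.εsMap_eq_sum h1, h1, tmul_sum, tmul_smul, h]

lemma comul_of_mem_Hs' {x : A} (hx : x ∈ V.Hs) :
    V.comul x = lTensor A (V.mul.flip x) (V.comul V.one) := by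
  obtain ⟨a, rfl⟩ := hx
  obtain ⟨S, h1⟩ := TensorProduct.exists_finset (V.comul V.one)
  have h := congrArg ((TensorProduct.rid R (A ⊗[R] A)).toLinearMap ∘ₗ
    lTensor (A ⊗[R] A) (V.counit ∘ₗ V.mul a)) (hV.rTensor_comul_comul_one_eq_sum' h1)
  rw [h1] at h
  simp at h
  simp [V.εsMap_eq_sum h1, h1, tmul_sum, tmul_smul, h]

lemma lTensor_mul_eq_mul₂ (x : A) (t : A ⊗[R] A) :
    lTensor A (V.mul x) t = V.mul₂ (V.one ⊗ₜ[R] x) t := by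
  rw [mul₂_tmul_left, show V.mul V.one = .id from LinearMap.ext hV.one_mul]
  rfl

lemma comul_mul_of_mem_Hs {x : A} (hx : x ∈ V.Hs) (y : A) :
    V.comul (V.mul x y) = lTensor A (V.mul x) (V.comul y) := by
  rw [hV.comul_mul, hV.comul_of_mem_Hs hx, hV.lTensor_mul_eq_mul₂, hV.mul₂_assoc,
    hV.mul₂_comul_one_comul, ← hV.lTensor_mul_eq_mul₂]

lemma εsMap_eq_self_of_comul {y : A} (hy : V.comul y = lTensor A (V.mul y) (V.comul V.one)) :
    V.εsMap y = y := by
  rw [εsMap_eq_rid_lTensor, lTensor_comp_apply, ← hy, hV.counit_right]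

lemma mul_mem_Hs {x y : A} (hx : x ∈ V.Hs) (hy : y ∈ V.Hs) : V.mul x y ∈ V.Hs := by
  refine ⟨V.mul x y, hV.εsMap_eq_self_of_comul ?_⟩
  rw [hV.comul_mul_of_mem_Hs hx, hV.comul_of_mem_Hs hy, hV.mul_mul_eq_comp, lTensor_comp_apply]

lemma εsMap_mul_εsMap (a b : A) :
    V.εsMap (V.mul a (V.εsMap b)) = V.mul (V.εsMap a) (V.εsMap b) := by
  rw [← hV.εsMap_εsMap_mul, hV.εsMap_of_mem_Hs (hV.mul_mem_Hs ⟨a, rfl⟩ ⟨b, rfl⟩)]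

lemma lTensor_εsMap_comp_mul_comul_one {x : A} (hx : x ∈ V.Hs) :
    lTensor A (V.εsMap ∘ₗ V.mul x) (V.comul V.one) =
      lTensor A (V.mul.flip x ∘ₗ V.εsMap) (V.comul V.one) := by
  have hflip : V.εsMap ∘ₗ V.mul.flip x = V.mul.flip x ∘ₗ V.εsMap := by
    obtain ⟨a, rfl⟩ := hx
    ext b
    exact hV.εsMap_mul_εsMap b a
  rw [lTensor_comp_apply, ← hV.comul_of_mem_Hs hx, hV.comul_of_mem_Hs' hx, ← lTensor_comp_apply,
    hflip]

lemma mulT_lTensor_εsMap_comul (h : A) : V.mulT (lTensor A V.εsMap (V.comul h)) = h := by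
  obtain ⟨S, h1⟩ := TensorProduct.exists_finset (V.comul V.one)
  have key : ∀ t : A ⊗[R] A, V.mulT (lTensor A V.εsMap t) =
      TensorProduct.rid R A (lTensor A V.counit (V.mul₂ t (V.comul V.one))) := by
    intro t
    induction t using TensorProduct.induction_on with
    | zero => simp [← mul₂ₗ_apply]
    | tmul a b => simp [mul₂_tmul_left, h1, V.εsMap_eq_sum h1]
    | add s t hs ht => simp only [map_add, ← mul₂ₗ_apply, LinearMap.add_apply] at *; rw [hs, ht]
  rw [key, hV.mul₂_comul_comul_one, hV.counit_right]

lemma rTensor_εsMap_comul (h : A) :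
    rTensor A V.εsMap (V.comul h) = lTensor A (V.mul h) (V.comul V.one) := by
  obtain ⟨S, h1⟩ := TensorProduct.exists_finset (V.comul V.one)
  -- Contract `Δ²1` against `Δh`: through coassociativity this gives `1' ⊗ h1''`, through
  -- `Δ²1 = (1 ⊗ Δ1)(Δ1 ⊗ 1)` it gives `ε_s(h') ⊗ h''`.
  let cL : A ⊗[R] A →ₗ[R] A := (TensorProduct.lid R A).toLinearMap ∘ₗ rTensor A V.counit
  let Φ : (A ⊗[R] A) ⊗[R] A →ₗ[R] A ⊗[R] A :=
    lTensor A (cL ∘ₗ V.mul₂ₗ (V.comul h)) ∘ₗ (TensorProduct.assoc R A A A).toLinearMap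
  have hΦ : Φ (rTensor A V.comul (V.comul V.one)) = lTensor A (V.mul h) (V.comul V.one) := by
    rw [LinearMap.comp_apply, LinearEquiv.coe_coe, hV.coassoc, ← lTensor_comp_apply]
    congr 2
    ext y
    simp [cL, mul₂ₗ_apply, ← hV.comul_mul, hV.counit_left]
  have hslice : ∀ (t : A ⊗[R] A) (j : A × A),
      ∑ i ∈ S, i.1 ⊗ₜ[R] cL (V.mul₂ t (V.mul j.1 i.2 ⊗ₜ[R] j.2)) =
        rTensor A V.εsMap (V.mul₂ t (j.1 ⊗ₜ[R] j.2)) := by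
    intro t j
    induction t using TensorProduct.induction_on with
    | zero => simp [← mul₂ₗ_apply]
    | tmul p q =>
      simp [cL, mul₂_tmul_left, V.εsMap_eq_sum h1, sum_tmul, smul_tmul', hV.mul_assoc]
    | add s t hs ht =>
      simp only [← mul₂ₗ_apply, map_add, LinearMap.add_apply, tmul_add, Finset.sum_add_distrib]
        at *
      rw [hs, ht]
  rw [← hΦ, hV.rTensor_comul_comul_one_eq_sum h1, ← hV.mul₂_comul_comul_one h, h1,
    ← mul₂ₗ_apply, map_sum, map_sum, Finset.sum_comm]
  simp only [Φ, mul₂ₗ_apply, map_sum, LinearMap.comp_apply, LinearEquiv.coe_coe, assoc_tmul,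
    lTensor_tmul]
  exact Finset.sum_congr rfl fun j _ => (hslice _ j).symm

lemma rTensor_Hs_subtype_injective (M : Type) [AddCommGroup M] [Module R M] :
    Function.Injective (rTensor M V.Hs.subtype) := by
  let retract : A →ₗ[R] V.Hs := V.εsMap.rangeRestrict
  have hretract : retract ∘ₗ V.Hs.subtype = LinearMap.id :=
    LinearMap.ext fun x => Subtype.ext (hV.εsMap_of_mem_Hs x.2)
  refine Function.LeftInverse.injective (g := rTensor M retract) fun t => ?_
  rw [← LinearMap.comp_apply (rTensor M retract), ← rTensor_comp, hretract, rTensor_id,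
    LinearMap.id_apply]

lemma comul_mul_of_comul_eq {g : A} (hg : V.comul g = V.mul₂ (g ⊗ₜ[R] g) (V.comul V.one))
    (a : A) : V.comul (V.mul g a) = map (V.mul g) (V.mul g) (V.comul a) := by
  rw [hV.comul_mul, hg, hV.mul₂_assoc, hV.mul₂_comul_one_comul, mul₂_tmul_left]

lemma εsMap_mul_of_εsMap_eq_one {g : A} (hg : V.εsMap g = V.one) (a : A) :
    V.εsMap (V.mul g a) = V.εsMap a := by
  rw [← hV.εsMap_εsMap_mul, hg, hV.one_mul]

lemma map_εsMap_mul_comul_of_mem_Hs (g : A) {x : A} (hx : x ∈ V.Hs) :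
    map V.εsMap (V.mul g) (V.comul x) = lTensor A (V.mul (V.mul g x)) (V.comul V.one) := by
  rw [hV.comul_of_mem_Hs hx, map_lTensor, ← lTensor_comp_rTensor, LinearMap.comp_apply,
    hV.rTensor_εsMap_comul_one, hV.mul_mul_eq_comp]

lemma assoc_rTensor_map_εsMap_mul_comul {g x : A}
    (hg : V.comul g = V.mul₂ (g ⊗ₜ[R] g) (V.comul V.one)) (hx : x ∈ V.Hs) :
    TensorProduct.assoc R A A A
        (rTensor A (map V.εsMap (V.mul g) ∘ₗ V.comul) (map V.εsMap (V.mul g) (V.comul x))) =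
      lTensor A V.comul (map V.εsMap (V.mul g) (V.comul x)) := by
  -- Both sides are images of `Δ²1`; the `ε_s` on its first leg is absorbed by `ε_s(1') ⊗ 1'' = Δ1`.
  have hcomul : V.comul ∘ₗ V.mul (V.mul g x) = map (V.mul g) (V.mul (V.mul g x)) ∘ₗ V.comul := by
    ext y
    simp [hV.mul_mul_eq_comp, hV.comul_mul_of_comul_eq hg, hV.comul_mul_of_mem_Hs hx]
  rw [hV.map_εsMap_mul_comul_of_mem_Hs g hx, ← LinearMap.comp_apply (rTensor A _),
    rTensor_comp_lTensor, ← map_rTensor, ← map_map_assoc, hV.coassoc, map_lTensor, ← hcomul,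
    ← lTensor_comp_rTensor, LinearMap.comp_apply, hV.rTensor_εsMap_comul_one, lTensor_comp_apply]

end IsWeakBialgebra

end WBData

section

open LinearMap

lemma coe_oneHs (hW : W.IsWeakBialgebra) : ((oneHs W : ↥W.Hs) : H) = W.one :=
  hW.εsMap_one

lemma rTensor_subtype_coactionOfGrouplike (g : H) (x : ↥W.Hs) :
    rTensor H W.Hs.subtype (coactionOfGrouplike W g x) = map W.εsMap (W.mul g) (W.comul x) := by
  have h : rTensor H W.Hs.subtype ∘ₗ map W.εsMap.rangeRestrict (W.mul g) =
      map W.εsMap (W.mul g) :=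
    TensorProduct.ext' fun _ _ => rfl
  exact LinearMap.congr_fun h (W.comul x)

lemma rTensor_subtype_coactionOfGrouplike_eq (hW : W.IsWeakBialgebra) (g : H) (x : ↥W.Hs) :
    rTensor H W.Hs.subtype (coactionOfGrouplike W g x) =
      lTensor H (W.mul (W.mul g x)) (W.comul W.one) := by
  rw [rTensor_subtype_coactionOfGrouplike, hW.map_εsMap_mul_comul_of_mem_Hs g x.2]

lemma coactionOfGrouplike_coassoc (hW : W.IsWeakBialgebra) {g : H}
    (hg : W.comul g = W.mul₂ (g ⊗ₜ[k] g) (W.comul W.one)) (x : ↥W.Hs) :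
    TensorProduct.assoc k (↥W.Hs) H H
        (rTensor H (coactionOfGrouplike W g) (coactionOfGrouplike W g x)) =
      lTensor (↥W.Hs) W.comul (coactionOfGrouplike W g x) := by
  have hpush : rTensor H W.Hs.subtype ∘ₗ coactionOfGrouplike W g =
      (map W.εsMap (W.mul g) ∘ₗ W.comul) ∘ₗ W.Hs.subtype :=
    LinearMap.ext (rTensor_subtype_coactionOfGrouplike W g)
  have hassoc : ∀ t, rTensor (H ⊗[k] H) W.Hs.subtype (TensorProduct.assoc k (↥W.Hs) H H t) =
      TensorProduct.assoc k H H H (rTensor H (rTensor H W.Hs.subtype) t) := fun t => by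
    simp [rTensor_tensor]
  apply hW.rTensor_Hs_subtype_injective (H ⊗[k] H)
  rw [hassoc, ← rTensor_comp_apply, hpush, rTensor_comp_apply,
    rTensor_subtype_coactionOfGrouplike,
    hW.assoc_rTensor_map_εsMap_mul_comul hg x.2, ← rTensor_subtype_coactionOfGrouplike,
    ← LinearMap.comp_apply (lTensor H _), ← LinearMap.comp_apply (rTensor _ _),
    rTensor_comp_lTensor, lTensor_comp_rTensor]

lemma coactionOfGrouplike_counit (hW : W.IsWeakBialgebra) {g : H} (hg : W.εsMap g = W.one)
    (x : ↥W.Hs) :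
    TensorProduct.rid k (↥W.Hs) (lTensor (↥W.Hs) W.counit (coactionOfGrouplike W g x)) = x := by
  apply Subtype.ext
  rw [← Submodule.subtype_apply, ← TensorProduct.rid_lTensor_rTensor,
    rTensor_subtype_coactionOfGrouplike_eq W hW, ← lTensor_comp_apply,
    ← WBData.εsMap_eq_rid_lTensor,
    hW.εsMap_mul_of_εsMap_eq_one hg, hW.εsMap_of_mem_Hs x.2]

lemma coactionOfGrouplike_compat (hW : W.IsWeakBialgebra) {g : H} (hg : W.εsMap g = W.one)
    (x : ↥W.Hs) :
    rTensor H W.Hs.subtype (lTensor (↥W.Hs) W.εsMap (coactionOfGrouplike W g x)) =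
      lTensor H W.εsMap (W.comul (W.εsMap x)) := by
  rw [← LinearMap.comp_apply (rTensor H _), rTensor_comp_lTensor, ← lTensor_comp_rTensor,
    LinearMap.comp_apply, rTensor_subtype_coactionOfGrouplike_eq W hW,
    hW.εsMap_of_mem_Hs x.2, hW.comul_of_mem_Hs x.2, ← lTensor_comp_apply, ← lTensor_comp_apply]
  congr 2
  ext y
  simp [hW.mul_assoc, hW.εsMap_mul_of_εsMap_eq_one hg]

lemma grouplikeOfCoaction_coactionOfGrouplike (hW : W.IsWeakBialgebra) (g : H) :
    grouplikeOfCoaction W (coactionOfGrouplike W g) = g := by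
  rw [grouplikeOfCoaction, rTensor_comp, LinearMap.comp_apply,
    rTensor_subtype_coactionOfGrouplike_eq W hW, coe_oneHs W hW, hW.mul_one,
    TensorProduct.lid_rTensor_lTensor]
  exact (congrArg (W.mul g) (hW.counit_left W.one)).trans (hW.mul_one g)

variable (β : ↥W.Hs →ₗ[k] ↥W.Hs ⊗[k] H)

def coactionCounit : ↥W.Hs →ₗ[k] H :=
  (TensorProduct.lid k H).toLinearMap ∘ₗ rTensor H (W.counit ∘ₗ W.Hs.subtype) ∘ₗ β

lemma grouplikeOfCoaction_eq_coactionCounit :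
    grouplikeOfCoaction W β = coactionCounit W β (oneHs W) :=
  rfl

variable (hW : W.IsWeakBialgebra)
  (hcoassoc : ∀ x : ↥W.Hs, TensorProduct.assoc k (↥W.Hs) H H (rTensor H β (β x)) =
    lTensor (↥W.Hs) W.comul (β x))
  (hcompat : ∀ x : ↥W.Hs, rTensor H W.Hs.subtype (lTensor (↥W.Hs) W.εsMap (β x)) =
    lTensor H W.εsMap (W.comul (W.εsMap x)))

include hcoassoc in
lemma rTensor_coactionCounit (x : ↥W.Hs) :
    rTensor H (coactionCounit W β) (β x) = W.comul (coactionCounit W β x) := by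
  let counitHs : ↥W.Hs ⊗[k] H →ₗ[k] H :=
    (TensorProduct.lid k H).toLinearMap ∘ₗ rTensor H (W.counit ∘ₗ W.Hs.subtype)
  let Θ : ↥W.Hs ⊗[k] (H ⊗[k] H) →ₗ[k] H ⊗[k] H :=
    (TensorProduct.lid k (H ⊗[k] H)).toLinearMap ∘ₗ rTensor (H ⊗[k] H) (W.counit ∘ₗ W.Hs.subtype)
  have hassoc : Θ ∘ₗ (TensorProduct.assoc k (↥W.Hs) H H).toLinearMap = rTensor H counitHs :=
    TensorProduct.ext_threefold fun u a b => by simp [Θ, counitHs, smul_tmul']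
  have hcomul : Θ ∘ₗ lTensor (↥W.Hs) W.comul = W.comul ∘ₗ counitHs :=
    TensorProduct.ext' fun u a => by simp [Θ, counitHs]
  calc rTensor H (coactionCounit W β) (β x)
      = Θ (TensorProduct.assoc k (↥W.Hs) H H (rTensor H β (β x))) := by
        rw [← LinearEquiv.coe_coe, ← LinearMap.comp_apply Θ, hassoc, ← rTensor_comp_apply]
        rfl
    _ = W.comul (coactionCounit W β x) := by
        rw [hcoassoc]
        exact LinearMap.congr_fun hcomul (β x)

include hW hcompat in
lemma εsMap_coactionCounit (x : ↥W.Hs) : W.εsMap (coactionCounit W β x) = x := by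
  have h := congrArg (fun t => TensorProduct.lid k H (rTensor H W.counit t)) (hcompat x)
  simp only [← rTensor_comp_apply, TensorProduct.lid_rTensor_lTensor, hW.counit_left,
    hW.εsMap_of_mem_Hs x.2] at h
  exact h

include hW hcoassoc hcompat

lemma rTensor_subtype_eq_rTensor_εsMap_comul (x : ↥W.Hs) :
    rTensor H W.Hs.subtype (β x) = rTensor H W.εsMap (W.comul (coactionCounit W β x)) := by
  rw [← rTensor_coactionCounit W β hcoassoc, ← rTensor_comp_apply]
  congr 2
  ext u
  exact (εsMap_coactionCounit W β hW hcompat u).symm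

lemma coactionCounit_eq_mul (x : ↥W.Hs) :
    coactionCounit W β x = W.mul (coactionCounit W β (oneHs W)) x := by
  set γ := coactionCounit W β
  let γ' : H →ₗ[k] H := γ ∘ₗ W.εsMap.rangeRestrict
  have hγ' : γ' ∘ₗ W.Hs.subtype = γ :=
    LinearMap.ext fun u => congrArg γ (Subtype.ext (hW.εsMap_of_mem_Hs u.2))
  have hmulT : ∀ (y : H) (t : H ⊗[k] H),
      W.mulT (lTensor H (W.mul.flip y) t) = W.mul (W.mulT t) y := by
    intro y t
    induction t using TensorProduct.induction_on with
    | zero => simp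
    | tmul a b => simp [hW.mul_assoc]
    | add s t hs ht => simp only [map_add, hs, ht, LinearMap.add_apply]
  -- `γ x = γ(x₀) ε_s(x₁) = γ(1') ε_s(x1'') = γ(1') ε_s(1'') x`
  have key : ∀ x : ↥W.Hs, γ x = W.mul (W.mulT (map γ' W.εsMap (W.comul W.one))) x := by
    intro x
    calc γ x = W.mulT (lTensor H W.εsMap (W.comul (γ x))) :=
          (hW.mulT_lTensor_εsMap_comul _).symm
      _ = W.mulT (rTensor H γ' (rTensor H W.Hs.subtype (lTensor (↥W.Hs) W.εsMap (β x)))) := by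
          rw [← rTensor_coactionCounit W β hcoassoc, ← rTensor_comp_apply, hγ',
            ← LinearMap.comp_apply (lTensor H _) (rTensor H _), lTensor_comp_rTensor,
            ← LinearMap.comp_apply (rTensor H _) (lTensor _ _), rTensor_comp_lTensor]
      _ = W.mulT (lTensor H (W.mul.flip x) (map γ' W.εsMap (W.comul W.one))) := by
          rw [hcompat, hW.εsMap_of_mem_Hs x.2, hW.comul_of_mem_Hs x.2, ← lTensor_comp_apply,
            hW.lTensor_εsMap_comp_mul_comul_one x.2, ← LinearMap.comp_apply (rTensor H γ'),
            rTensor_comp_lTensor, ← lTensor_comp_map]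
          rfl
      _ = _ := hmulT _ _
  rw [key x, key (oneHs W), coe_oneHs W hW, hW.mul_one]

lemma isRightGroupLike_grouplikeOfCoaction : W.IsRightGroupLike (grouplikeOfCoaction W β) := by
  set g := grouplikeOfCoaction W β with hg
  have hγ : coactionCounit W β = W.mul g ∘ₗ W.Hs.subtype :=
    LinearMap.ext (coactionCounit_eq_mul W β hW hcoassoc hcompat)
  refine ⟨?_, by rw [hg, grouplikeOfCoaction_eq_coactionCounit,
    εsMap_coactionCounit W β hW hcompat, coe_oneHs W hW]⟩
  calc W.comul g = rTensor H (coactionCounit W β) (β (oneHs W)) :=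
        (rTensor_coactionCounit W β hcoassoc (oneHs W)).symm
    _ = rTensor H (W.mul g) (rTensor H W.εsMap (W.comul g)) := by
        rw [hγ, rTensor_comp_apply, rTensor_subtype_eq_rTensor_εsMap_comul W β hW hcoassoc hcompat]
        rfl
    _ = W.mul₂ (g ⊗ₜ[k] g) (W.comul W.one) := by
        rw [hW.rTensor_εsMap_comul, ← LinearMap.comp_apply (rTensor H _) (lTensor H _),
          rTensor_comp_lTensor, W.mul₂_tmul_left]

lemma coactionOfGrouplike_grouplikeOfCoaction :
    coactionOfGrouplike W (grouplikeOfCoaction W β) = β := by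
  obtain ⟨hg, hεg⟩ := isRightGroupLike_grouplikeOfCoaction W β hW hcoassoc hcompat
  ext x
  apply hW.rTensor_Hs_subtype_injective H
  rw [rTensor_subtype_coactionOfGrouplike,
    rTensor_subtype_eq_rTensor_εsMap_comul W β hW hcoassoc hcompat,
    coactionCounit_eq_mul W β hW hcoassoc hcompat, ← grouplikeOfCoaction_eq_coactionCounit,
    hW.comul_mul_of_comul_eq hg, rTensor_map]
  congr 2
  ext y
  exact (hW.εsMap_mul_of_εsMap_eq_one hεg y).symm

end

/-- one-to-one correspondence between right group-like elements `g ∈ H` and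
right `H`-coactions `β : H_s → H_s ⊗ H` satisfying
`(id⊗ε_s)∘β = (id⊗ε_s)∘Δ∘ε_s`; the correspondence sends `β` to `g = ε(1₀)1₁` and a right
group-like `g` to `β(x) = ε_s(x') ⊗ (g x'')`. -/
theorem grouplike_coaction_correspondence (hW : W.IsWeakBialgebra) :
    (∀ g : H, W.IsRightGroupLike g →
      IsCompatibleCoactionOnHs W (coactionOfGrouplike W g) ∧
      grouplikeOfCoaction W (coactionOfGrouplike W g) = g) ∧
    (∀ β : ↥(W.Hs) →ₗ[k] ↥(W.Hs) ⊗[k] H, IsCompatibleCoactionOnHs W β →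
      W.IsRightGroupLike (grouplikeOfCoaction W β) ∧
      coactionOfGrouplike W (grouplikeOfCoaction W β) = β) := by
  refine ⟨fun g ⟨hΔg, hεg⟩ => ⟨⟨coactionOfGrouplike_coassoc W hW hΔg,
      coactionOfGrouplike_counit W hW hεg, coactionOfGrouplike_compat W hW hεg⟩,
      grouplikeOfCoaction_coactionOfGrouplike W hW g⟩, fun β ⟨hcoassoc, _, hcompat⟩ => ?_⟩
  exact ⟨isRightGroupLike_grouplikeOfCoaction W β hW hcoassoc hcompat,
    coactionOfGrouplike_grouplikeOfCoaction W β hW hcoassoc hcompat⟩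

end Statement12
end
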